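/- arXiv:1707.01486 — 9 statements merged into one kernel-verified Lean document; each statement's English description precedes it below -/
import Mathlib

section
/- Let I ⊆ ℝ be an interval and let v, w : I → ℝ be differentiable functions with v'(r) = w(r) and w'(r) = (w(r) − 1/2)·v(r) for all r ∈ I, and suppose w(r) ≠ 1/2 for all r ∈ I. Then the function r ↦ v(r)² − 2·w(r) − ln|2·w(r) − 1| is constant on I. -/
/-!
Along a solution, `(v²)' = 2vw`, `(2w)' = (2w − 1)v` and `(ln|2w − 1|)' = 2w'/(2w − 1) = v`, which
sum to `2vw − (2w − 1)v − v = 0`; a function with vanishing derivative on an interval is constant.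
-/

open Real

theorem Convex.eq_of_hasDerivWithinAt_zero {E : Type*} [NormedAddCommGroup E] [NormedSpace ℝ E]
    {f : ℝ → E} {s : Set ℝ} (hs : Convex ℝ s) (hf : ∀ x ∈ s, HasDerivWithinAt f 0 s x)
    {x y : ℝ} (hx : x ∈ s) (hy : y ∈ s) : f x = f y := by
  have h := hs.norm_image_sub_le_of_norm_hasDerivWithin_le hf (C := 0) (fun _ _ => by simp) hx hy
  rw [zero_mul, norm_le_zero_iff, sub_eq_zero] at h
  exact h.symm

theorem hasDerivAt_log_abs_of_ne_zero {f : ℝ → ℝ} {f' x : ℝ} (hf : HasDerivAt f f' x)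
    (hx : f x ≠ 0) : HasDerivAt (fun y => log |f y|) (f' / f x) x := by
  simpa only [log_abs] using hf.log hx

theorem hasDerivAt_shrinkingSoliton_firstIntegral {v w : ℝ → ℝ} {r : ℝ}
    (hv : HasDerivAt v (w r) r) (hw : HasDerivAt w ((w r - 1 / 2) * v r) r)
    (hne : w r ≠ 1 / 2) :
    HasDerivAt (fun r => v r ^ 2 - 2 * w r - log |2 * w r - 1|) 0 r := by
  have hne' : 2 * w r - 1 ≠ 0 := fun h => hne (by linarith)
  have hlog_deriv : 2 * ((w r - 1 / 2) * v r) / (2 * w r - 1) = v r :=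
    div_eq_of_eq_mul hne' (by ring)
  have hlog := hasDerivAt_log_abs_of_ne_zero ((hw.const_mul 2).sub_const 1) hne'
  rw [hlog_deriv] at hlog
  exact (((hv.fun_pow 2).fun_sub (hw.const_mul 2)).fun_sub hlog).congr_deriv (by push_cast; ring)

/-- First integral of the normalized shrinking soliton system `v' = w`, `w' = (w − 1/2)·v`:
the quantity `v² − 2w − ln|2w − 1|` is constant. -/
theorem shrinking_soliton_first_integral
    (I : Set ℝ) (hI : I.OrdConnected) (v w : ℝ → ℝ)
    (hv : ∀ r ∈ I, HasDerivAt v (w r) r)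
    (hw : ∀ r ∈ I, HasDerivAt w ((w r - 1 / 2) * v r) r)
    (hne : ∀ r ∈ I, w r ≠ 1 / 2) :
    ∃ C : ℝ, ∀ r ∈ I, (v r) ^ 2 - 2 * w r - Real.log |2 * w r - 1| = C := by
  rcases I.eq_empty_or_nonempty with rfl | ⟨r₀, hr₀⟩
  · exact ⟨0, fun r hr => hr.elim⟩
  refine ⟨v r₀ ^ 2 - 2 * w r₀ - log |2 * w r₀ - 1|, fun r hr => ?_⟩
  refine hI.convex.eq_of_hasDerivWithinAt_zero
    (f := fun r => v r ^ 2 - 2 * w r - log |2 * w r - 1|) (fun x hx => ?_) hr hr₀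
  exact (hasDerivAt_shrinkingSoliton_firstIntegral (hv x hx) (hw x hx) (hne x hx)).hasDerivWithinAt
end

section
/- Let I ⊆ ℝ be an interval and let v, w : I → ℝ be differentiable functions with v'(r) = w(r) and w'(r) = (w(r) + 1/2)·v(r) for all r ∈ I, and suppose w(r) ≠ −1/2 for all r ∈ I. Then the function r ↦ v(r)² − 2·w(r) + ln|2·w(r) + 1| is constant on I. -/
open Real

theorem Convex.eq_of_forall_hasDerivWithinAt_zero {E : Type*} [NormedAddCommGroup E]
    [NormedSpace ℝ E] {s : Set ℝ} (hs : Convex ℝ s) {f : ℝ → E}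
    (hf : ∀ x ∈ s, HasDerivWithinAt f 0 s x) {x y : ℝ} (hx : x ∈ s) (hy : y ∈ s) :
    f x = f y := by
  have h := hs.norm_image_sub_le_of_norm_hasDerivWithin_le hf (C := 0) (by simp) hx hy
  rw [zero_mul, norm_le_zero_iff, sub_eq_zero] at h
  exact h.symm

noncomputable def solitonFirstIntegral (v w : ℝ) : ℝ :=
  v ^ 2 - 2 * w + log |2 * w + 1|

/-- `∂H/∂v = 2v` and `∂H/∂w = -2 + 2/(2w + 1)`, so along the flow
`dH/dr = 2vw - 2(w + 1/2)v + v = 0`. -/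
theorem hasDerivAt_solitonFirstIntegral {v w : ℝ → ℝ} {r : ℝ}
    (hv : HasDerivAt v (w r) r) (hw : HasDerivAt w ((w r + 1 / 2) * v r) r)
    (hne : 2 * w r + 1 ≠ 0) :
    HasDerivAt (fun t => solitonFirstIntegral (v t) (w t)) 0 r := by
  have hlin : HasDerivAt (fun t => 2 * w t + 1) (v r * (2 * w r + 1)) r :=
    ((hw.const_mul 2).add_const 1).congr_deriv (by ring)
  have hlog : HasDerivAt (fun t => log |2 * w t + 1|) (v r) r := by
    simpa only [log_abs, mul_div_cancel_right₀ _ hne] using hlin.log hne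
  exact (((hv.pow 2).sub (hw.const_mul 2)).add hlog).congr_deriv (by push_cast; ring)

/-- First integral of the normalized expanding soliton system `v' = w`, `w' = (w + 1/2)·v`:
the quantity `v² − 2w + ln|2w + 1|` is constant. -/
theorem expanding_soliton_first_integral
    (I : Set ℝ) (hI : I.OrdConnected) (v w : ℝ → ℝ)
    (hv : ∀ r ∈ I, HasDerivAt v (w r) r)
    (hw : ∀ r ∈ I, HasDerivAt w ((w r + 1 / 2) * v r) r)
    (hne : ∀ r ∈ I, w r ≠ -(1 / 2)) :
    ∃ C : ℝ, ∀ r ∈ I, (v r) ^ 2 - 2 * w r + Real.log |2 * w r + 1| = C := by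
  rcases I.eq_empty_or_nonempty with rfl | ⟨r₀, hr₀⟩
  · exact ⟨0, by simp⟩
  have hderiv : ∀ r ∈ I, HasDerivWithinAt (fun t => solitonFirstIntegral (v t) (w t)) 0 I r :=
    fun r hr => (hasDerivAt_solitonFirstIntegral (hv r hr) (hw r hr)
      (fun h => hne r hr (by linarith))).hasDerivWithinAt
  exact ⟨_, fun r hr => hI.convex.eq_of_forall_hasDerivWithinAt_zero hderiv hr hr₀⟩
end

section
/- For every pair of real numbers α₁, α₂ with 0 < α₁ < α₂ < ∞ there exists a unique a > 0 with the following property: there exist A > 0 and a twice differentiable function h : [0, A] → ℝ with h > 0 on (0, A), satisfying h''(r) − a·h(r)·h'(r) + h(r)/2 = 0 for all r ∈ [0, A], together with the boundary conditions h(0) = 0, h(A) = 0, h'(0) = α₁/(2π), and h'(A) = −α₂/(2π). -/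
/-!
With `p = h' - a / 2 * h ^ 2` the equation becomes `p' = -h / 2`, and
`Q = (2 a h' - 1) exp (2 a h' - a² h²)` is a first integral. At a zero of `h` it equals
`(t - 1) eᵗ` with `t = 2 a h'`, so a solution forces `(t₀ - 1) e^t₀ = (t₁ - 1) e^t₁` for the
boundary slopes `y₀ = α₁ / 2π`, `y₁ = -α₂ / 2π`, `tᵢ = 2 a yᵢ`. Since `y₀ + y₁ < 0`, the difference
of the two sides first decreases and then increases in `a > 0`, so it has exactly one positive zero.

For that `a`, the level set of `Q` is the curve `h² = Φ(p)`, where `Φ` is concave, vanishes at `y₁`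
and `y₀` and is positive in between. The equation `p' = -√Φ(p) / 2` is solved by quadrature in the
angle `θ`, where `p = c + R sin θ`. Concavity bounds `Φ` below by a parabola, which keeps the
integrand bounded, so `p` runs from `y₀` to `y₁` in finite time `A`, and `h = √Φ(p)` is the soliton.
-/

open Real Set Filter Topology MeasureTheory

theorem ConcaveOn.one_sub_abs_mul_le {f : ℝ → ℝ} {c R s : ℝ} (hf : ConcaveOn ℝ univ f)
    (hl : 0 ≤ f (c - R)) (hr : 0 ≤ f (c + R)) (hs : |s| ≤ 1) :
    (1 - |s|) * f c ≤ f (c + R * s) := by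
  wlog h : 0 ≤ s generalizing R s
  · simpa using this (R := -R) (s := -s) (by rwa [sub_neg_eq_add]) (by rwa [← sub_eq_add_neg])
      (by rwa [abs_neg]) (by linarith)
  rw [abs_of_nonneg h] at hs ⊢
  have := hf.2 (mem_univ c) (mem_univ (c + R)) (sub_nonneg.2 hs) h (sub_add_cancel 1 s)
  simp only [smul_eq_mul] at this
  calc (1 - s) * f c ≤ (1 - s) * f c + s * f (c + R) := le_add_of_nonneg_right (mul_nonneg h hr)
    _ ≤ f ((1 - s) * c + s * (c + R)) := this
    _ = f (c + R * s) := by ring_nf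

theorem hasDerivWithinAt_Icc_of_forall_hasDerivAt {f f' : ℝ → ℝ} {x y r : ℝ} (hxy : x < y)
    (hf : ContinuousOn f (Icc x y)) (hf' : ContinuousOn f' (Icc x y))
    (hd : ∀ z ∈ Ioo x y, HasDerivAt f (f' z) z) (hr : r ∈ Icc x y) :
    HasDerivWithinAt f (f' r) (Icc x y) r := by
  rw [hasDerivWithinAt_iff_hasFDerivWithinAt, ← closure_Ioo hxy.ne]
  refine hasFDerivWithinAt_closure_of_tendsto_fderiv
    (fun z hz => (hd z hz).differentiableAt.differentiableWithinAt) (convex_Ioo x y) isOpen_Ioo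
    (fun z hz => (hf z (closure_Ioo hxy.ne ▸ hz)).mono Ioo_subset_Icc_self) ?_
  have hlim : Tendsto (fun z => ContinuousLinearMap.toSpanSingleton ℝ (f' z)) (𝓝[Ioo x y] r)
      (𝓝 (ContinuousLinearMap.toSpanSingleton ℝ (f' r))) :=
    (ContinuousLinearMap.toSpanSingletonCLE.continuous.tendsto _).comp
      ((hf' r hr).mono Ioo_subset_Icc_self)
  exact hlim.congr' (eventually_nhdsWithin_of_forall fun z hz => (hd z hz).hasFDerivAt.fderiv.symm)

theorem exists_continuous_inverse_of_strictAntiOn {f : ℝ → ℝ} {x y : ℝ} (hxy : x ≤ y)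
    (hf : ContinuousOn f (Icc x y)) (hf_anti : StrictAntiOn f (Icc x y)) :
    ∃ g : ℝ → ℝ, Continuous g ∧ StrictAnti g ∧ g (f x) = x ∧ g (f y) = y ∧
      ∀ r ∈ Icc (f y) (f x), f (g r) = r := by
  set q : ℝ → ℝ := fun θ => projIcc x y hxy θ
  set F : ℝ → ℝ := fun θ => f (q θ) - (θ - q θ)
  have hF_eq : ∀ θ ∈ Icc x y, F θ = f θ := fun θ hθ => by simp [F, q, projIcc_of_mem hxy hθ]
  have hq : Continuous q := continuous_subtype_val.comp continuous_projIcc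
  have hF_cont : Continuous F :=
    (hf.comp_continuous hq fun θ => (projIcc x y hxy θ).2).sub (continuous_id.sub hq)
  have hF_anti : StrictAnti F := by
    intro θ₁ θ₂ h
    have hmono : q θ₁ ≤ q θ₂ := monotone_projIcc hxy h.le
    have hlip : q θ₂ - q θ₁ ≤ θ₂ - θ₁ := by
      have := abs_projIcc_sub_projIcc (c := θ₂) (d := θ₁) hxy
      rwa [abs_of_nonneg (sub_nonneg.2 hmono), abs_of_pos (sub_pos.2 h)] at this
    rcases hmono.eq_or_lt with heq | hlt
    · simp only [F, heq]; linarith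
    · have := hf_anti (projIcc x y hxy θ₁).2 (projIcc x y hxy θ₂).2 hlt
      simp only [F]; linarith
  have hF_surj : Function.Surjective F := by
    refine hF_cont.surjective' ?_ ?_
    · refine tendsto_atTop_add_const_left _ (f x + x) tendsto_neg_atBot_atTop |>.congr' ?_
      filter_upwards [eventually_le_atBot x] with θ hθ
      simp only [projIcc_of_le_left hxy hθ, F, q]; ring
    · refine tendsto_atBot_add_const_left _ (f y + y) tendsto_neg_atTop_atBot |>.congr' ?_
      filter_upwards [eventually_ge_atTop y] with θ hθ
      simp only [projIcc_of_right_le hxy hθ, F, q]; ring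
  have hG : StrictMono fun θ => F (-θ) := fun θ₁ θ₂ h => hF_anti (neg_lt_neg h)
  set e := hG.orderIsoOfSurjective _ (hF_surj.comp neg_surjective)
  have hFg : ∀ r, F (-e.symm r) = r := hG.orderIsoOfSurjective_self_symm_apply _ _
  have hgF : ∀ θ, -e.symm (F θ) = θ := fun θ => hF_anti.injective (hFg _)
  set g : ℝ → ℝ := fun r => -e.symm r
  have hg_anti : StrictAnti g := fun r s h => neg_lt_neg (e.symm.strictMono h)
  have hgx : g (f x) = x := by simpa [hF_eq x (left_mem_Icc.2 hxy)] using hgF x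
  have hgy : g (f y) = y := by simpa [hF_eq y (right_mem_Icc.2 hxy)] using hgF y
  refine ⟨g, e.symm.continuous.neg, hg_anti, hgx, hgy, fun r hr => ?_⟩
  have hmem : g r ∈ Icc x y := ⟨hgx ▸ hg_anti.antitone hr.2, hgy ▸ hg_anti.antitone hr.1⟩
  rw [← hF_eq _ hmem]
  exact hFg r

noncomputable section

namespace FootballSoliton

def edgeEnergy (t : ℝ) : ℝ := (t - 1) * exp t

def firstIntegral (a x y : ℝ) : ℝ := (2 * a * y - 1) * exp (2 * a * y - a ^ 2 * x ^ 2)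

def energyGap (y₀ y₁ a : ℝ) : ℝ := edgeEnergy (2 * a * y₀) - edgeEnergy (2 * a * y₁)

def energyGapRate (y₀ y₁ a : ℝ) : ℝ := y₀ ^ 2 * exp (2 * a * y₀) - y₁ ^ 2 * exp (2 * a * y₁)

def IsFootballProfile (a y₀ y₁ A : ℝ) (h h' h'' : ℝ → ℝ) : Prop :=
  0 < A ∧
    (∀ r ∈ Icc (0 : ℝ) A, HasDerivWithinAt h (h' r) (Icc (0 : ℝ) A) r) ∧
    (∀ r ∈ Icc (0 : ℝ) A, HasDerivWithinAt h' (h'' r) (Icc (0 : ℝ) A) r) ∧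
    (∀ r ∈ Icc (0 : ℝ) A, h'' r - a * h r * h' r + h r / 2 = 0) ∧
    (∀ r ∈ Ioo (0 : ℝ) A, 0 < h r) ∧
    h 0 = 0 ∧ h A = 0 ∧ h' 0 = y₀ ∧ h' A = y₁

theorem hasDerivAt_edgeEnergy (t : ℝ) : HasDerivAt edgeEnergy (t * exp t) t :=
  (((hasDerivAt_id t).sub_const 1).mul (hasDerivAt_exp t)).congr_deriv (by simp only [one_mul, id_eq]; ring)

theorem edgeEnergy_neg {t : ℝ} (ht : t < 1) : edgeEnergy t < 0 :=
  mul_neg_of_neg_of_pos (by linarith) (exp_pos t)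

theorem edgeEnergy_strictAntiOn : StrictAntiOn edgeEnergy (Iic 0) := by
  refine strictAntiOn_of_deriv_neg (convex_Iic 0)
    (fun t _ => (hasDerivAt_edgeEnergy t).continuousAt.continuousWithinAt) fun t ht => ?_
  rw [interior_Iic] at ht
  rw [(hasDerivAt_edgeEnergy t).deriv]
  exact mul_neg_of_neg_of_pos ht (exp_pos t)

theorem firstIntegral_zero (a y : ℝ) : firstIntegral a 0 y = edgeEnergy (2 * a * y) := by
  simp [firstIntegral, edgeEnergy]

theorem hasDerivWithinAt_firstIntegral {a r h₂ : ℝ} {h h' : ℝ → ℝ} {s : Set ℝ}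
    (hh : HasDerivWithinAt h (h' r) s r) (hh' : HasDerivWithinAt h' h₂ s r)
    (hode : h₂ - a * h r * h' r + h r / 2 = 0) :
    HasDerivWithinAt (fun r => firstIntegral a (h r) (h' r)) 0 s r := by
  have := ((hh'.const_mul (2 * a)).sub_const 1).mul
    (((hh'.const_mul (2 * a)).sub ((hh.pow 2).const_mul (a ^ 2))).exp)
  refine this.congr_deriv ?_
  push_cast
  linear_combination (4 * a ^ 2 * h' r * exp (2 * a * h' r - a ^ 2 * h r ^ 2)) * hode

theorem IsFootballProfile.energyGap_eq_zero {a y₀ y₁ A : ℝ} {h h' h'' : ℝ → ℝ}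
    (hsol : IsFootballProfile a y₀ y₁ A h h' h'') : energyGap y₀ y₁ a = 0 := by
  obtain ⟨hA, hd, hd', hode, -, h0, hA0, h'0, h'A⟩ := hsol
  have hconst := (convex_Icc 0 A).norm_image_sub_le_of_norm_hasDerivWithin_le
    (fun r hr => hasDerivWithinAt_firstIntegral (hd r hr) (hd' r hr) (hode r hr))
    (fun _ _ => (norm_zero (E := ℝ)).le)
    (left_mem_Icc.2 hA.le) (right_mem_Icc.2 hA.le)
  rw [zero_mul, norm_le_zero_iff, sub_eq_zero, hA0, h0, h'A, h'0, firstIntegral_zero,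
    firstIntegral_zero] at hconst
  rw [energyGap, hconst, sub_self]

section EnergyGap

variable {y₀ y₁ : ℝ}

theorem hasDerivAt_energyGap (y₀ y₁ a : ℝ) :
    HasDerivAt (energyGap y₀ y₁) (4 * a * energyGapRate y₀ y₁ a) a := by
  have hlin (y : ℝ) : HasDerivAt (fun a => 2 * a * y) (2 * y) a := by
    simpa using ((hasDerivAt_id a).const_mul 2).mul_const y
  exact (((hasDerivAt_edgeEnergy _).comp a (hlin y₀)).sub
    ((hasDerivAt_edgeEnergy _).comp a (hlin y₁))).congr_deriv (by rw [energyGapRate]; ring)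

theorem continuous_energyGap (y₀ y₁ : ℝ) : Continuous (energyGap y₀ y₁) :=
  continuous_iff_continuousAt.2 fun a => (hasDerivAt_energyGap y₀ y₁ a).continuousAt

theorem energyGap_zero : energyGap y₀ y₁ 0 = 0 := by simp [energyGap]

theorem energyGapRate_strictMono (h₀ : 0 < y₀) (h₁ : y₁ < 0) :
    StrictMono (energyGapRate y₀ y₁) := by
  intro u v huv
  have e₀ : exp (2 * u * y₀) < exp (2 * v * y₀) := exp_lt_exp.2 (by nlinarith)
  have e₁ : exp (2 * v * y₁) < exp (2 * u * y₁) := exp_lt_exp.2 (by nlinarith)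
  unfold energyGapRate
  nlinarith [pow_pos h₀ 2, pow_pos (neg_pos.2 h₁) 2]

theorem energyGap_strictAntiOn (h₀ : 0 < y₀) (h₁ : y₁ < 0) {c : ℝ}
    (hc : energyGapRate y₀ y₁ c ≤ 0) : StrictAntiOn (energyGap y₀ y₁) (Icc 0 c) := by
  refine strictAntiOn_of_deriv_neg (convex_Icc 0 c) (continuous_energyGap y₀ y₁).continuousOn
    fun t ht => ?_
  rw [interior_Icc] at ht
  rw [(hasDerivAt_energyGap y₀ y₁ t).deriv]
  exact mul_neg_of_pos_of_neg (by linarith [ht.1])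
    ((energyGapRate_strictMono h₀ h₁ ht.2).trans_le hc)

theorem energyGap_strictMonoOn (h₀ : 0 < y₀) (h₁ : y₁ < 0) {c : ℝ} (hc₀ : 0 ≤ c)
    (hc : 0 ≤ energyGapRate y₀ y₁ c) : StrictMonoOn (energyGap y₀ y₁) (Ici c) := by
  refine strictMonoOn_of_deriv_pos (convex_Ici c) (continuous_energyGap y₀ y₁).continuousOn
    fun t ht => ?_
  rw [interior_Ici] at ht
  rw [(hasDerivAt_energyGap y₀ y₁ t).deriv]
  exact mul_pos (by linarith [mem_Ioi.1 ht])
    (hc.trans_lt (energyGapRate_strictMono h₀ h₁ ht))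

theorem energyGap_pos_of_root_lt (h₀ : 0 < y₀) (h₁ : y₁ < 0) {u v : ℝ} (hu : 0 < u)
    (hroot : energyGap y₀ y₁ u = 0) (huv : u < v) : 0 < energyGap y₀ y₁ v := by
  have hrate : 0 < energyGapRate y₀ y₁ u := by
    by_contra! hle
    have := energyGap_strictAntiOn h₀ h₁ hle (left_mem_Icc.2 hu.le) (right_mem_Icc.2 hu.le) hu
    rw [energyGap_zero, hroot] at this
    exact this.false
  have := energyGap_strictMonoOn h₀ h₁ hu.le hrate.le self_mem_Ici (mem_Ici.2 huv.le) huv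
  rwa [hroot] at this

theorem energyGap_root_unique (h₀ : 0 < y₀) (h₁ : y₁ < 0) {u v : ℝ} (hu : 0 < u) (hv : 0 < v)
    (hru : energyGap y₀ y₁ u = 0) (hrv : energyGap y₀ y₁ v = 0) : u = v := by
  rcases lt_trichotomy u v with huv | rfl | hvu
  · exact absurd hrv (energyGap_pos_of_root_lt h₀ h₁ hu hru huv).ne'
  · rfl
  · exact absurd hru (energyGap_pos_of_root_lt h₀ h₁ hv hrv hvu).ne'

theorem exists_energyGap_root (h₀ : 0 < y₀) (hsum : y₀ + y₁ < 0) :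
    ∃ a, 0 < a ∧ energyGap y₀ y₁ a = 0 := by
  have h₁ : y₁ < 0 := by linarith
  have hrate₀ : energyGapRate y₀ y₁ 0 < 0 := by
    simp only [energyGapRate, mul_zero, zero_mul, exp_zero, mul_one]
    nlinarith
  have hrate_cont : Continuous (energyGapRate y₀ y₁) := by unfold energyGapRate; fun_prop
  obtain ⟨c, hc, hc₀⟩ : ∃ c, energyGapRate y₀ y₁ c < 0 ∧ 0 < c :=
    (((hrate_cont.tendsto 0).eventually (gt_mem_nhds hrate₀)).filter_mono nhdsWithin_le_nhds
      |>.and (self_mem_nhdsWithin (s := Ioi 0))).exists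
  have hneg : energyGap y₀ y₁ c < 0 := by
    have := energyGap_strictAntiOn h₀ h₁ hc.le (left_mem_Icc.2 hc₀.le) (right_mem_Icc.2 hc₀.le) hc₀
    rwa [energyGap_zero] at this
  have hpos : 0 < energyGap y₀ y₁ (1 / (2 * y₀)) := by
    have : 2 * (1 / (2 * y₀)) * y₀ = 1 := by field_simp
    rw [energyGap, this, edgeEnergy, sub_self, zero_mul, zero_sub, neg_pos]
    exact edgeEnergy_neg (by nlinarith [div_pos one_pos (mul_pos two_pos h₀)])
  obtain ⟨a, ha, hroot⟩ := intermediate_value_uIcc (continuous_energyGap y₀ y₁).continuousOn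
    (Icc_subset_uIcc ⟨hneg.le, hpos.le⟩)
  exact ⟨a, (lt_min hc₀ (by positivity)).trans_le ha.1, hroot⟩

end EnergyGap

def AboveParabola (Φ : ℝ → ℝ) (c R κ : ℝ) : Prop :=
  ∀ s ∈ Icc (-1 : ℝ) 1, κ * (1 - s ^ 2) ≤ Φ (c + R * s)

/-- `dr = -2 dp / √(Φ p)` in the variable `θ` with `p = c + R sin θ`, which is bounded when `Φ` is
`AboveParabola`: the substitution absorbs the square-root singularities at `p = c ± R`. -/
def travelDensity (Φ : ℝ → ℝ) (c R θ : ℝ) : ℝ := 2 * R * cos θ / √(Φ (c + R * sin θ))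

def travelTime (Φ : ℝ → ℝ) (c R θ : ℝ) : ℝ := ∫ s in θ..π / 2, travelDensity Φ c R s

section Quadrature

variable {Φ : ℝ → ℝ} {c R κ : ℝ}

theorem AboveParabola.sqrt_mul_abs_cos_le (hΦ : AboveParabola Φ c R κ) (hκ : 0 < κ) (θ : ℝ) :
    √κ * |cos θ| ≤ √(Φ (c + R * sin θ)) := by
  rw [← sqrt_sq_eq_abs, ← sqrt_mul hκ.le, cos_sq']
  exact sqrt_le_sqrt (hΦ _ ⟨neg_one_le_sin θ, sin_le_one θ⟩)

theorem abs_travelDensity_le (hR : 0 ≤ R) (hκ : 0 < κ) (hΦ : AboveParabola Φ c R κ) (θ : ℝ) :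
    |travelDensity Φ c R θ| ≤ 2 * R / √κ := by
  have hcos := hΦ.sqrt_mul_abs_cos_le hκ θ
  rcases (sqrt_nonneg (Φ (c + R * sin θ))).eq_or_lt with h | h
  · rw [travelDensity, ← h, div_zero, abs_zero]
    positivity
  · rw [travelDensity, abs_div, abs_of_pos h, div_le_div_iff₀ h (sqrt_pos.2 hκ), abs_mul,
      abs_of_nonneg (by positivity : 0 ≤ 2 * R)]
    nlinarith

theorem measurable_travelDensity (hΦc : Continuous Φ) : Measurable (travelDensity Φ c R) := by
  unfold travelDensity
  fun_prop

theorem intervalIntegrable_travelDensity (hΦc : Continuous Φ) (hR : 0 ≤ R) (hκ : 0 < κ)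
    (hΦ : AboveParabola Φ c R κ) (x y : ℝ) :
    IntervalIntegrable (travelDensity Φ c R) volume x y :=
  (intervalIntegrable_const (c := 2 * R / √κ)).mono_fun
    (measurable_travelDensity hΦc).aestronglyMeasurable
    (ae_of_all _ fun θ => (abs_travelDensity_le hR hκ hΦ θ).trans (le_abs_self _))

theorem AboveParabola.apply_sin_pos (hΦ : AboveParabola Φ c R κ) (hκ : 0 < κ) {θ : ℝ}
    (hθ : θ ∈ Ioo (-(π / 2)) (π / 2)) : 0 < Φ (c + R * sin θ) := by
  have := hΦ.sqrt_mul_abs_cos_le hκ θ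
  have : 0 < √κ * |cos θ| := mul_pos (sqrt_pos.2 hκ) (abs_pos.2 (cos_pos_of_mem_Ioo hθ).ne')
  exact sqrt_pos.1 (by linarith)

theorem travelDensity_pos (hR : 0 < R) (hκ : 0 < κ) (hΦ : AboveParabola Φ c R κ) {θ : ℝ}
    (hθ : θ ∈ Ioo (-(π / 2)) (π / 2)) : 0 < travelDensity Φ c R θ := by
  have := cos_pos_of_mem_Ioo hθ
  have := sqrt_pos.2 (hΦ.apply_sin_pos hκ hθ)
  unfold travelDensity
  positivity

theorem hasDerivAt_travelTime (hΦc : Continuous Φ) (hR : 0 ≤ R) (hκ : 0 < κ)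
    (hΦ : AboveParabola Φ c R κ) {θ : ℝ} (hθ : θ ∈ Ioo (-(π / 2)) (π / 2)) :
    HasDerivAt (travelTime Φ c R) (-travelDensity Φ c R θ) θ := by
  have hcont : ContinuousAt (travelDensity Φ c R) θ := by
    have := (sqrt_pos.2 (hΦ.apply_sin_pos hκ hθ)).ne'
    unfold travelDensity
    fun_prop (disch := assumption)
  exact intervalIntegral.integral_hasDerivAt_left
    (intervalIntegrable_travelDensity hΦc hR hκ hΦ _ _)
    (measurable_travelDensity hΦc).aestronglyMeasurable.stronglyMeasurableAtFilter
    hcont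

theorem continuous_travelTime (hΦc : Continuous Φ) (hR : 0 ≤ R) (hκ : 0 < κ)
    (hΦ : AboveParabola Φ c R κ) : Continuous (travelTime Φ c R) := by
  have := (intervalIntegral.continuous_primitive
    (intervalIntegrable_travelDensity hΦc hR hκ hΦ) (π / 2)).neg
  exact this.congr fun θ => by rw [travelTime, intervalIntegral.integral_symm]; rfl

theorem travelTime_strictAntiOn (hΦc : Continuous Φ) (hR : 0 < R) (hκ : 0 < κ)
    (hΦ : AboveParabola Φ c R κ) :
    StrictAntiOn (travelTime Φ c R) (Icc (-(π / 2)) (π / 2)) := by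
  refine strictAntiOn_of_deriv_neg (convex_Icc _ _)
    (continuous_travelTime hΦc hR.le hκ hΦ).continuousOn fun θ hθ => ?_
  rw [interior_Icc] at hθ
  rw [(hasDerivAt_travelTime hΦc hR.le hκ hΦ hθ).deriv, neg_lt_zero]
  exact travelDensity_pos hR hκ hΦ hθ

theorem exists_trajectory_of_aboveParabola (hΦc : Continuous Φ) (hR : 0 < R) (hκ : 0 < κ)
    (hΦ : AboveParabola Φ c R κ) :
    ∃ A > 0, ∃ p : ℝ → ℝ, Continuous p ∧ p 0 = c + R ∧ p A = c - R ∧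
      ∀ r ∈ Ioo 0 A, 0 < Φ (p r) ∧ HasDerivAt p (-(√(Φ (p r)) / 2)) r := by
  have hπ : -(π / 2) < π / 2 := neg_lt_self pi_div_two_pos
  have hanti := travelTime_strictAntiOn hΦc hR hκ hΦ
  have hend : travelTime Φ c R (π / 2) = 0 := intervalIntegral.integral_same
  obtain ⟨Θ, hΘc, hΘanti, hΘA, hΘ0, hτΘ⟩ := exists_continuous_inverse_of_strictAntiOn hπ.le
    (continuous_travelTime hΦc hR.le hκ hΦ).continuousOn hanti
  rw [hend] at hΘ0 hτΘ
  set A := travelTime Φ c R (-(π / 2))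
  have hA : 0 < A := hend ▸ hanti (left_mem_Icc.2 hπ.le) (right_mem_Icc.2 hπ.le) hπ
  refine ⟨A, hA, fun r => c + R * sin (Θ r), by fun_prop, by simp [hΘ0],
    by simp [hΘA, sub_eq_add_neg], fun r hr => ?_⟩
  have hθ : Θ r ∈ Ioo (-(π / 2)) (π / 2) := ⟨hΘA ▸ hΘanti hr.2, hΘ0 ▸ hΘanti hr.1⟩
  have hpos := hΦ.apply_sin_pos hκ hθ
  refine ⟨hpos, ?_⟩
  have hΘd : HasDerivAt Θ (-travelDensity Φ c R (Θ r))⁻¹ r :=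
    HasDerivAt.of_local_left_inverse hΘc.continuousAt (hasDerivAt_travelTime hΦc hR.le hκ hΦ hθ)
      (neg_ne_zero.2 (travelDensity_pos hR hκ hΦ hθ).ne')
      (eventually_of_mem (Ioo_mem_nhds hr.1 hr.2) fun s hs => hτΘ s (Ioo_subset_Icc_self hs))
  refine ((((hasDerivAt_sin (Θ r)).comp r hΘd).const_mul R).const_add c).congr_deriv ?_
  have := (cos_pos_of_mem_Ioo hθ).ne'
  have := (sqrt_pos.2 hpos).ne'
  rw [travelDensity]
  field_simp

end Quadrature

/-- Solving `firstIntegral a h (p + a / 2 * h ^ 2) = E` for `h ^ 2` gives `h ^ 2 = profile a E p`. -/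
def profile (a E u : ℝ) : ℝ := (E * exp (-(2 * a * u)) - 2 * a * u + 1) / a ^ 2

theorem profile_eq (a E u : ℝ) :
    profile a E u = (E - edgeEnergy (2 * a * u)) * exp (-(2 * a * u)) / a ^ 2 := by
  have h := exp_add (2 * a * u) (-(2 * a * u))
  rw [add_neg_cancel, exp_zero] at h
  rw [profile, edgeEnergy]
  linear_combination (-(2 * a * u - 1) / a ^ 2) * h

theorem profile_edgeEnergy (a y : ℝ) : profile a (edgeEnergy (2 * a * y)) y = 0 := by
  simp [profile_eq]

theorem continuous_profile (a E : ℝ) : Continuous (profile a E) := by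
  unfold profile; fun_prop

theorem hasDerivAt_profile (a E u : ℝ) :
    HasDerivAt (profile a E) ((-2 * a * E * exp (-(2 * a * u)) - 2 * a) / a ^ 2) u := by
  have hlin : HasDerivAt (fun u => 2 * a * u) (2 * a) u := by
    simpa using (hasDerivAt_id u).const_mul (2 * a)
  refine ((((hlin.fun_neg.exp.const_mul E).sub hlin).add_const 1).div_const (a ^ 2)).congr_deriv ?_
  ring

theorem concaveOn_profile {a E : ℝ} (ha : 0 < a) (hE : E ≤ 0) :
    ConcaveOn ℝ univ (profile a E) := by
  refine Antitone.concaveOn_univ_of_deriv (fun u => (hasDerivAt_profile a E u).differentiableAt)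
    fun u v huv => ?_
  rw [(hasDerivAt_profile a E u).deriv, (hasDerivAt_profile a E v).deriv]
  have : 0 ≤ -2 * a * E := by nlinarith
  gcongr

theorem hasDerivAt_sqrt_profile_comp {a E r : ℝ} {p : ℝ → ℝ} (ha : a ≠ 0)
    (hpos : 0 < profile a E (p r)) (hp : HasDerivAt p (-(√(profile a E (p r)) / 2)) r) :
    HasDerivAt (fun r => √(profile a E (p r))) (p r + a / 2 * profile a E (p r)) r := by
  refine (((hasDerivAt_profile a E (p r)).comp r hp).sqrt hpos.ne').congr_deriv ?_
  have hs := (sqrt_pos.2 hpos).ne'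
  rw [Function.comp_apply]
  field_simp
  rw [profile]
  field_simp
  ring

theorem aboveParabola_profile {a y₀ y₁ : ℝ} (ha : 0 < a) (h₀ : 0 < y₀) (hsum : y₀ + y₁ < 0)
    (hroot : energyGap y₀ y₁ a = 0) :
    ∃ κ > 0,
      AboveParabola (profile a (edgeEnergy (2 * a * y₀))) ((y₀ + y₁) / 2) ((y₀ - y₁) / 2) κ := by
  set E := edgeEnergy (2 * a * y₀)
  have hE : E = edgeEnergy (2 * a * y₁) := sub_eq_zero.1 hroot
  have hE₀ : E ≤ 0 := hE ▸ (edgeEnergy_neg (by nlinarith)).le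
  have hcenter : 0 < profile a E ((y₀ + y₁) / 2) := by
    have : edgeEnergy (2 * a * ((y₀ + y₁) / 2)) < E := hE ▸ edgeEnergy_strictAntiOn
      (mem_Iic.2 (by nlinarith)) (mem_Iic.2 (by nlinarith)) (by nlinarith)
    rw [profile_eq]
    have := sub_pos.2 this
    positivity
  have hleft : profile a E ((y₀ + y₁) / 2 - (y₀ - y₁) / 2) = 0 := by
    rw [show (y₀ + y₁) / 2 - (y₀ - y₁) / 2 = y₁ by ring, hE, profile_edgeEnergy]
  have hright : profile a E ((y₀ + y₁) / 2 + (y₀ - y₁) / 2) = 0 := by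
    rw [show (y₀ + y₁) / 2 + (y₀ - y₁) / 2 = y₀ by ring, profile_edgeEnergy]
  refine ⟨profile a E ((y₀ + y₁) / 2) / 2, half_pos hcenter, fun s hs => ?_⟩
  have := (concaveOn_profile ha hE₀).one_sub_abs_mul_le hleft.ge hright.ge (abs_le.2 hs)
  nlinarith [sq_abs s, sq_nonneg (1 - |s|), abs_nonneg s]

theorem exists_isFootballProfile_of_trajectory {a E y₀ y₁ A : ℝ} {p : ℝ → ℝ} (ha : a ≠ 0)
    (hA : 0 < A) (hp : Continuous p) (hp0 : p 0 = y₀) (hpA : p A = y₁)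
    (hy₀ : profile a E y₀ = 0) (hy₁ : profile a E y₁ = 0)
    (hpd : ∀ r ∈ Ioo 0 A, 0 < profile a E (p r) ∧ HasDerivAt p (-(√(profile a E (p r)) / 2)) r) :
    ∃ h h' h'' : ℝ → ℝ, IsFootballProfile a y₀ y₁ A h h' h'' := by
  set h : ℝ → ℝ := fun r => √(profile a E (p r))
  set h' : ℝ → ℝ := fun r => p r + a / 2 * h r ^ 2
  set h'' : ℝ → ℝ := fun r => a * h r * h' r - h r / 2
  have hc : Continuous h := ((continuous_profile a E).comp hp).sqrt
  have hc' : Continuous h' := by fun_prop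
  have hd : ∀ r ∈ Ioo 0 A, HasDerivAt h (h' r) r := fun r hr => by
    have := hasDerivAt_sqrt_profile_comp ha (hpd r hr).1 (hpd r hr).2
    rwa [← sq_sqrt (hpd r hr).1.le] at this
  have hd' : ∀ r ∈ Ioo 0 A, HasDerivAt h' (h'' r) r := fun r hr => by
    refine ((hpd r hr).2.add (((hd r hr).pow 2).const_mul (a / 2))).congr_deriv ?_
    simp only [h'']
    push_cast
    ring
  refine ⟨h, h', h'', hA,
    fun r hr => hasDerivWithinAt_Icc_of_forall_hasDerivAt hA hc.continuousOn hc'.continuousOn hd hr,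
    fun r hr => hasDerivWithinAt_Icc_of_forall_hasDerivAt hA hc'.continuousOn
      (by fun_prop : Continuous h'').continuousOn hd' hr,
    fun r _ => by ring, fun r hr => sqrt_pos.2 (hpd r hr).1, ?_, ?_, ?_, ?_⟩ <;>
  simp [h, h', hp0, hpA, hy₀, hy₁]

theorem exists_isFootballProfile {a y₀ y₁ : ℝ} (ha : 0 < a) (h₀ : 0 < y₀) (hsum : y₀ + y₁ < 0)
    (hroot : energyGap y₀ y₁ a = 0) : ∃ A h h' h'', IsFootballProfile a y₀ y₁ A h h' h'' := by
  obtain ⟨κ, hκ, hbound⟩ := aboveParabola_profile ha h₀ hsum hroot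
  obtain ⟨A, hA, p, hp, hp0, hpA, hpd⟩ :=
    exists_trajectory_of_aboveParabola (continuous_profile a _) (by linarith) hκ hbound
  refine ⟨A, exists_isFootballProfile_of_trajectory ha.ne' hA hp (hp0.trans (by ring))
    (hpA.trans (by ring)) (profile_edgeEnergy a y₀) ?_ hpd⟩
  rw [sub_eq_zero.1 hroot, profile_edgeEnergy]

end FootballSoliton

end

/-- Existence and uniqueness of the football soliton parameter: for `0 < α₁ < α₂`
there is a unique `a > 0` for which the shrinking soliton ODE
`h'' − a·h·h' + h/2 = 0` has a solution on `[0, A]`, positive on `(0, A)`, with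
`h(0) = h(A) = 0`, `h'(0) = α₁/(2π)` and `h'(A) = −α₂/(2π)`. -/
theorem football_soliton_exists_unique (α₁ α₂ : ℝ) (h1 : 0 < α₁) (h2 : α₁ < α₂) :
    ∃! a : ℝ, 0 < a ∧
      ∃ (A : ℝ) (h h' h'' : ℝ → ℝ), 0 < A ∧
        (∀ r ∈ Set.Icc (0 : ℝ) A, HasDerivWithinAt h (h' r) (Set.Icc (0 : ℝ) A) r) ∧
        (∀ r ∈ Set.Icc (0 : ℝ) A, HasDerivWithinAt h' (h'' r) (Set.Icc (0 : ℝ) A) r) ∧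
        (∀ r ∈ Set.Icc (0 : ℝ) A, h'' r - a * h r * h' r + h r / 2 = 0) ∧
        (∀ r ∈ Set.Ioo (0 : ℝ) A, 0 < h r) ∧
        h 0 = 0 ∧ h A = 0 ∧
        h' 0 = α₁ / (2 * Real.pi) ∧ h' A = -α₂ / (2 * Real.pi) := by
  have hy₀ : 0 < α₁ / (2 * π) := by positivity
  have hsum : α₁ / (2 * π) + -α₂ / (2 * π) < 0 := by
    rw [← add_div]
    exact div_neg_of_neg_of_pos (by linarith) (by positivity)
  obtain ⟨a, ha, hroot⟩ := FootballSoliton.exists_energyGap_root hy₀ hsum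
  refine ⟨a, ⟨ha, FootballSoliton.exists_isFootballProfile ha hy₀ hsum hroot⟩, ?_⟩
  rintro b ⟨hb, A, h, h', h'', hsol⟩
  exact FootballSoliton.energyGap_root_unique hy₀ (by linarith) hb ha
    (FootballSoliton.IsFootballProfile.energyGap_eq_zero hsol) hroot
end

section
/- Let a, ε ∈ ℝ and A > 0, and let h : [0, A] → ℝ be twice continuously differentiable with h(0) = h(A) = 0, h'(0) = −h'(A) ≠ 0, h(r) > 0 for all r ∈ (0, A), and h''(r) − a·h(r)·h'(r) − (ε/2)·h(r) = 0 for all r ∈ [0, A]. Then a = 0. -/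
/-!
Along a solution, the energy `E = h'²/2 − (ε/4)·h²` satisfies `E' = h'·(h'' − (ε/2)·h) = a·h·h'²`.
The boundary conditions give `E(0) = E(A)`, so `a · ∫₀ᴬ h·h'² = 0`. The integrand is continuous and
nonnegative, and positive wherever `h' ≠ 0` inside `(0, A)`; by the mean value theorem `h'` is
positive somewhere there, since `h` rises from `h(0) = 0`. Hence the integral is positive and `a = 0`.
-/

open Set intervalIntegral

noncomputable def solitonEnergy (ε : ℝ) (h h' : ℝ → ℝ) (r : ℝ) : ℝ :=
  h' r ^ 2 / 2 - ε / 4 * h r ^ 2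

section

variable {a ε x b c : ℝ} {h h' h'' : ℝ → ℝ} {s : Set ℝ}

theorem hasDerivWithinAt_solitonEnergy (hh : HasDerivWithinAt h (h' x) s x)
    (hh' : HasDerivWithinAt h' (h'' x) s x) (hode : h'' x - a * h x * h' x - ε / 2 * h x = 0) :
    HasDerivWithinAt (solitonEnergy ε h h') (a * (h x * h' x ^ 2)) s x := by
  have hderiv := ((hh'.fun_pow 2).div_const 2).sub ((hh.fun_pow 2).const_mul (ε / 4))
  refine hderiv.congr_deriv ?_
  linear_combination h' x * hode

theorem mul_integral_eq_solitonEnergy_sub (hbc : b ≤ c)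
    (hd1 : ∀ r ∈ Icc b c, HasDerivWithinAt h (h' r) (Icc b c) r)
    (hd2 : ∀ r ∈ Icc b c, HasDerivWithinAt h' (h'' r) (Icc b c) r)
    (hode : ∀ r ∈ Icc b c, h'' r - a * h r * h' r - ε / 2 * h r = 0) :
    a * ∫ r in b..c, h r * h' r ^ 2 = solitonEnergy ε h h' c - solitonEnergy ε h h' b := by
  have hE : ∀ r ∈ Icc b c,
      HasDerivWithinAt (solitonEnergy ε h h') (a * (h r * h' r ^ 2)) (Icc b c) r :=
    fun r hr => hasDerivWithinAt_solitonEnergy (hd1 r hr) (hd2 r hr) (hode r hr)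
  have hcont : ContinuousOn (fun r => a * (h r * h' r ^ 2)) (Icc b c) := by
    have hh : ContinuousOn h (Icc b c) := fun r hr => (hd1 r hr).continuousWithinAt
    have hh' : ContinuousOn h' (Icc b c) := fun r hr => (hd2 r hr).continuousWithinAt
    fun_prop
  rw [← integral_const_mul]
  refine integral_eq_sub_of_hasDerivAt_of_le hbc (fun r hr => (hE r hr).continuousWithinAt)
    (fun r hr => (hE r (Ioo_subset_Icc_self hr)).hasDerivAt (Icc_mem_nhds hr.1 hr.2))
    (hcont.intervalIntegrable_of_Icc hbc)

theorem exists_mem_Ioo_deriv_pos (hbc : b < c) (hlt : h b < h c)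
    (hd : ∀ r ∈ Icc b c, HasDerivWithinAt h (h' r) (Icc b c) r) :
    ∃ x ∈ Ioo b c, 0 < h' x := by
  obtain ⟨x, hx, hslope⟩ := exists_hasDerivAt_eq_slope h h' hbc
    (fun r hr => (hd r hr).continuousWithinAt)
    (fun r hr => (hd r (Ioo_subset_Icc_self hr)).hasDerivAt (Icc_mem_nhds hr.1 hr.2))
  exact ⟨x, hx, hslope ▸ div_pos (sub_pos.2 hlt) (sub_pos.2 hbc)⟩

theorem integral_mul_deriv_sq_pos (hbc : b < c)
    (hd1 : ∀ r ∈ Icc b c, HasDerivWithinAt h (h' r) (Icc b c) r)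
    (hd2 : ∀ r ∈ Icc b c, HasDerivWithinAt h' (h'' r) (Icc b c) r)
    (hb : h b = 0) (hc : h c = 0) (hpos : ∀ r ∈ Ioo b c, 0 < h r) :
    0 < ∫ r in b..c, h r * h' r ^ 2 := by
  obtain ⟨m, hm⟩ : (Ioo b c).Nonempty := nonempty_Ioo.2 hbc
  have hsub : Icc b m ⊆ Icc b c := Icc_subset_Icc_right hm.2.le
  obtain ⟨x, hx, hx'⟩ := exists_mem_Ioo_deriv_pos (h := h) hm.1 (by rw [hb]; exact hpos m hm)
    fun r hr => (hd1 r (hsub hr)).mono hsub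
  have hxbc : x ∈ Ioo b c := ⟨hx.1, hx.2.trans hm.2⟩
  have hh : ContinuousOn h (Icc b c) := fun r hr => (hd1 r hr).continuousWithinAt
  have hh' : ContinuousOn h' (Icc b c) := fun r hr => (hd2 r hr).continuousWithinAt
  refine integral_pos hbc (by fun_prop) (fun r hr => ?_)
    ⟨x, Ioo_subset_Icc_self hxbc, by have := hpos x hxbc; positivity⟩
  rcases hr.2.eq_or_lt with rfl | hrc
  · simp [hc]
  · have := hpos r ⟨hr.1, hrc⟩
    positivity

end

theorem closed_equal_angles_soliton_a_eq_zero_general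
    (a ε A : ℝ) (hA : 0 < A) (h h' h'' : ℝ → ℝ)
    (hd1 : ∀ r ∈ Set.Icc (0 : ℝ) A, HasDerivWithinAt h (h' r) (Set.Icc (0 : ℝ) A) r)
    (hd2 : ∀ r ∈ Set.Icc (0 : ℝ) A, HasDerivWithinAt h' (h'' r) (Set.Icc (0 : ℝ) A) r)
    (h0 : h 0 = 0) (hA0 : h A = 0)
    (hsym : h' 0 = -h' A)
    (hpos : ∀ r ∈ Set.Ioo (0 : ℝ) A, 0 < h r)
    (hode : ∀ r ∈ Set.Icc (0 : ℝ) A, h'' r - a * h r * h' r - ε / 2 * h r = 0) :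
    a = 0 := by
  have hE : solitonEnergy ε h h' A = solitonEnergy ε h h' 0 := by
    simp only [solitonEnergy, h0, hA0, hsym, neg_sq]
  have hzero := mul_integral_eq_solitonEnergy_sub hA.le hd1 hd2 hode
  rw [hE, sub_self] at hzero
  exact (mul_eq_zero.1 hzero).resolve_right (integral_mul_deriv_sq_pos hA hd1 hd2 h0 hA0 hpos).ne'

/-- A closed rotationally symmetric soliton with two equal cone angles has `a = 0`:
if `h` solves `h'' − a·h·h' − (ε/2)·h = 0` on `[0, A]` with `h(0) = h(A) = 0`,
`h'(0) = −h'(A) ≠ 0` and `h > 0` on `(0, A)`, then `a = 0`. -/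
theorem closed_equal_angles_soliton_a_eq_zero
    (a ε A : ℝ) (hA : 0 < A) (h h' h'' : ℝ → ℝ)
    (hd1 : ∀ r ∈ Set.Icc (0 : ℝ) A, HasDerivWithinAt h (h' r) (Set.Icc (0 : ℝ) A) r)
    (hd2 : ∀ r ∈ Set.Icc (0 : ℝ) A, HasDerivWithinAt h' (h'' r) (Set.Icc (0 : ℝ) A) r)
    (hcont : ContinuousOn h'' (Set.Icc (0 : ℝ) A))
    (h0 : h 0 = 0) (hA0 : h A = 0)
    (hsym : h' 0 = -h' A) (hne : h' 0 ≠ 0)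
    (hpos : ∀ r ∈ Set.Ioo (0 : ℝ) A, 0 < h r)
    (hode : ∀ r ∈ Set.Icc (0 : ℝ) A, h'' r - a * h r * h' r - ε / 2 * h r = 0) :
    a = 0 :=
  closed_equal_angles_soliton_a_eq_zero_general a ε A hA h h' h'' hd1 hd2 h0 hA0 hsym hpos hode
end

section
/- Let H, F : ℝ → ℝ be differentiable, nonconstant functions satisfying H'(r) = H(r)·F(r) − 2·H(r)² + 1/2 and F'(r) = 2·H(r)·F(r) − 2·H(r)² + 1/2 for all r ∈ ℝ, with H bounded on ℝ and H(r) → 1/2 as r → −∞. Then 0 < H(r) < 1/2 and −1/2 < F'(r) < 0 for all r ∈ ℝ. -/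
/-!
In terms of `v = F - 2H + 1` the system reads `H' = H v - (H - 1/2)`, `v' = 2H² - 1/2`, and
`F' = 2H v + (2H - 1)²/2`; the point `(H, F) = (1/2, 0)` is an equilibrium, so by uniqueness of
solutions a nonconstant solution never reaches it.

If `H > 1/2` somewhere, then either `v < 0` there, and going backwards the solution stays in
`{H > 1/2, v < 0}` with `H` decreasing in `r`, against `H → 1/2` at `-∞`; or (after moving slightly
forward) `v > 0`, and going forwards it stays in `{H > 1/2, v > 0}`, where `F - H` and then `H`
grow linearly, against boundedness. So `H ≤ 1/2`, and a maximum `H = 1/2` would force `F = 0`.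

Near `-∞`, `F'` can stay neither `≤ -1/2` (then `H' ≤ -H²`, and `H` exceeds `1/2` further left)
nor `≥ 0` (then `H` increases and cannot tend to `1/2` from below), so by connectedness some point
lies in the region `0 < H < 1/2`, `-1/2 < F' < 0`. That region is forward invariant: on its boundary
`F'' = 2H³ > 0` where `F' = -1/2`, `F'' = 2(1/4 - H²)(F - 2H) < 0` where `F' = 0`, and `H = 1/2`
forces the equilibrium.
-/

open Filter Set Topology

theorem mul_sub_le_sub_of_le_hasDerivAt {f f' : ℝ → ℝ} {a b C : ℝ}
    (hf : ∀ x ∈ Icc a b, HasDerivAt f (f' x) x) (hab : a ≤ b) (hC : ∀ x ∈ Ioo a b, C ≤ f' x) :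
    C * (b - a) ≤ f b - f a := by
  have hcont : ContinuousOn f (Icc a b) := fun x hx => (hf x hx).continuousAt.continuousWithinAt
  rw [← interior_Icc] at hC
  refine (convex_Icc a b).mul_sub_le_image_sub_of_le_deriv hcont
    (fun x hx => (hf x (interior_subset hx)).differentiableAt.differentiableWithinAt)
    (fun x hx => (hf x (interior_subset hx)).deriv ▸ hC x hx) a ⟨le_rfl, hab⟩ b ⟨hab, le_rfl⟩ hab

theorem sub_le_mul_sub_of_hasDerivAt_le {f f' : ℝ → ℝ} {a b C : ℝ}
    (hf : ∀ x ∈ Icc a b, HasDerivAt f (f' x) x) (hab : a ≤ b) (hC : ∀ x ∈ Ioo a b, f' x ≤ C) :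
    f b - f a ≤ C * (b - a) := by
  have := mul_sub_le_sub_of_le_hasDerivAt (f := -f) (f' := -f') (C := -C)
    (fun x hx => (hf x hx).neg) hab (fun x hx => neg_le_neg (hC x hx))
  simp only [Pi.neg_apply] at this
  linarith

theorem le_of_hasDerivAt_nonneg {f f' : ℝ → ℝ} {a b : ℝ}
    (hf : ∀ x ∈ Icc a b, HasDerivAt f (f' x) x) (hab : a ≤ b) (h : ∀ x ∈ Ioo a b, 0 ≤ f' x) :
    f a ≤ f b := by
  linarith [mul_sub_le_sub_of_le_hasDerivAt hf hab h]

theorem le_of_hasDerivAt_nonpos {f f' : ℝ → ℝ} {a b : ℝ}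
    (hf : ∀ x ∈ Icc a b, HasDerivAt f (f' x) x) (hab : a ≤ b) (h : ∀ x ∈ Ioo a b, f' x ≤ 0) :
    f b ≤ f a := by
  linarith [sub_le_mul_sub_of_hasDerivAt_le hf hab h]

theorem HasDerivAt.nonneg_of_forall_Ioo_le {g : ℝ → ℝ} {d s w : ℝ} (hg : HasDerivAt g d w)
    (hsw : s < w) (hle : ∀ u ∈ Ioo s w, g u ≤ g w) : 0 ≤ d := by
  refine ge_of_tendsto (hasDerivAt_iff_tendsto_slope_left_right.1 hg).1 ?_
  filter_upwards [Ioo_mem_nhdsLT hsw] with u hu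
  rw [slope_def_field]
  exact div_nonneg_of_nonpos (sub_nonpos.2 (hle u hu)) (sub_nonpos.2 hu.2.le)

theorem HasDerivAt.eventually_lt_nhdsGT {g : ℝ → ℝ} {d t : ℝ} (hg : HasDerivAt g d t)
    (hd : 0 < d) : ∀ᶠ u in 𝓝[>] t, g t < g u := by
  filter_upwards [(hasDerivAt_iff_tendsto_slope_left_right.1 hg).2.eventually
    (eventually_gt_nhds hd), self_mem_nhdsWithin] with u hslope (hu : t < u)
  rw [slope_def_field] at hslope
  exact sub_pos.1 ((div_pos_iff_of_pos_right (sub_pos.2 hu)).1 hslope)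

theorem Ici_subset_of_forall_Ico_subset {U : Set ℝ} (hU : IsOpen U) {s : ℝ} (hs : s ∈ U)
    (hexit : ∀ w, s < w → Ico s w ⊆ U → w ∈ U) : Ici s ⊆ U := by
  intro t (hst : s ≤ t)
  by_contra ht
  have hE : IsClosed (Icc s t \ U) := isClosed_Icc.sdiff hU
  have hbdd : BddBelow (Icc s t \ U) := ⟨s, fun x hx => hx.1.1⟩
  have hw := hE.csInf_mem ⟨t, ⟨hst, le_rfl⟩, ht⟩ hbdd
  refine hw.2 (hexit _ (hw.1.1.lt_of_ne fun h => hw.2 (h ▸ hs)) fun u hu => ?_)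
  by_contra hu'
  exact (csInf_le hbdd ⟨⟨hu.1, hu.2.le.trans hw.1.2⟩, hu'⟩).not_gt hu.2

theorem Iic_subset_of_forall_Ioc_subset {U : Set ℝ} (hU : IsOpen U) {s : ℝ} (hs : s ∈ U)
    (hexit : ∀ w, w < s → Ioc w s ⊆ U → w ∈ U) : Iic s ⊆ U := by
  intro t (hts : t ≤ s)
  have := Ici_subset_of_forall_Ico_subset (hU.preimage continuous_neg) (s := -s)
    (by simpa using hs) (fun w hsw hsub => ?_) (neg_le_neg hts : -s ≤ -t)
  · simpa using this
  · refine hexit (-w) (by linarith) fun u hu => ?_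
    simpa using hsub ⟨neg_le_neg hu.2, by linarith [hu.1]⟩

theorem IsPreconnected.forall_le_or_forall_ge_of_forall_notMem_Ioo {X α : Type*}
    [TopologicalSpace X] [LinearOrder α] [TopologicalSpace α] [OrderClosedTopology α]
    [DenselyOrdered α] {s : Set X} (hs : IsPreconnected s) {f : X → α} (hf : ContinuousOn f s)
    {a b : α} (hab : a < b) (hgap : ∀ x ∈ s, f x ∉ Ioo a b) :
    (∀ x ∈ s, f x ≤ a) ∨ (∀ x ∈ s, b ≤ f x) := by
  by_contra hcon
  push Not at hcon
  obtain ⟨⟨x, hx, hax⟩, ⟨y, hy, hyb⟩⟩ := hcon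
  have hbx : b ≤ f x := not_lt.1 fun h => hgap x hx ⟨hax, h⟩
  have hya : f y ≤ a := not_lt.1 fun h => hgap y hy ⟨h, hyb⟩
  obtain ⟨c, hac, hcb⟩ := exists_between hab
  obtain ⟨z, hz, rfl⟩ := hs.intermediate_value hy hx hf ⟨hya.trans hac.le, hcb.le.trans hbx⟩
  exact hgap z hz ⟨hac, hcb⟩

theorem ODE_solution_eq_of_vectorField_eq_zero {E : Type*} [NormedAddCommGroup E]
    [NormedSpace ℝ E] {V : E → E} (hV : ContDiff ℝ 1 V) {γ : ℝ → E}
    (hγ : ∀ t, HasDerivAt γ (V (γ t)) t) {t₀ : ℝ} (h₀ : V (γ t₀) = 0) (t : ℝ) :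
    γ t = γ t₀ := by
  have hopen : IsOpen {t | γ t = γ t₀} := by
    refine isOpen_iff_mem_nhds.2 fun t₁ (ht₁ : γ t₁ = γ t₀) => ?_
    obtain ⟨K, U, hU, hK⟩ := (hV.contDiffAt (x := γ t₀)).exists_lipschitzOnWith
    have hγU : ∀ᶠ t in 𝓝 t₁, γ t ∈ U := (hγ t₁).continuousAt.preimage_mem_nhds (ht₁ ▸ hU)
    exact ODE_solution_unique_of_eventually (v := fun _ => V) (s := fun _ => U)
      (g := fun _ => γ t₀) (Eventually.of_forall fun _ => hK)
      (hγU.mono fun t ht => ⟨hγ t, ht⟩)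
      (Eventually.of_forall fun _ => ⟨h₀ ▸ hasDerivAt_const _ _, mem_of_mem_nhds hU⟩) ht₁
  have hclosed : IsClosed {t | γ t = γ t₀} :=
    isClosed_eq (continuous_iff_continuousAt.2 fun t => (hγ t).continuousAt) continuous_const
  exact eq_univ_iff_forall.1 (IsClopen.eq_univ ⟨hclosed, hopen⟩ ⟨t₀, rfl⟩) t

structure IsCuspSoliton (H F : ℝ → ℝ) : Prop where
  hasDerivAt_H (r : ℝ) : HasDerivAt H (H r * F r - 2 * H r ^ 2 + 1 / 2) r
  hasDerivAt_F (r : ℝ) : HasDerivAt F (2 * H r * F r - 2 * H r ^ 2 + 1 / 2) r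

def IsPinched (H F : ℝ → ℝ) (r : ℝ) : Prop :=
  0 < H r ∧ H r < 1 / 2 ∧ -(1 / 2) < 2 * H r * F r - 2 * H r ^ 2 + 1 / 2 ∧
    2 * H r * F r - 2 * H r ^ 2 + 1 / 2 < 0

namespace IsCuspSoliton

variable {H F : ℝ → ℝ}

theorem continuous_H (h : IsCuspSoliton H F) : Continuous H :=
  continuous_iff_continuousAt.2 fun r => (h.hasDerivAt_H r).continuousAt

theorem continuous_F (h : IsCuspSoliton H F) : Continuous F :=
  continuous_iff_continuousAt.2 fun r => (h.hasDerivAt_F r).continuousAt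

theorem hasDerivAt_F_sub_two_mul_H (h : IsCuspSoliton H F) (r : ℝ) :
    HasDerivAt (fun r => F r - 2 * H r) (2 * H r ^ 2 - 1 / 2) r :=
  ((h.hasDerivAt_F r).sub ((h.hasDerivAt_H r).const_mul 2)).congr_deriv (by ring)

theorem hasDerivAt_F' (h : IsCuspSoliton H F) (r : ℝ) :
    HasDerivAt (fun r => 2 * H r * F r - 2 * H r ^ 2 + 1 / 2)
      (2 * (H r * F r - 2 * H r ^ 2 + 1 / 2) * (F r - 2 * H r) +
        2 * H r * (2 * H r * F r - 2 * H r ^ 2 + 1 / 2)) r :=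
  ((((h.hasDerivAt_H r).const_mul 2).mul (h.hasDerivAt_F r)).sub
    (((h.hasDerivAt_H r).pow 2).const_mul 2) |>.add_const (1 / 2)).congr_deriv (by push_cast; ring)

theorem continuous_F' (h : IsCuspSoliton H F) :
    Continuous fun r => 2 * H r * F r - 2 * H r ^ 2 + 1 / 2 :=
  continuous_iff_continuousAt.2 fun r => (h.hasDerivAt_F' r).continuousAt

theorem F_ne_zero_of_H_eq_half (h : IsCuspSoliton H F) (hnc : ∃ r s, H r ≠ H s) {r₀ : ℝ}
    (hr₀ : H r₀ = 1 / 2) : F r₀ ≠ 0 := by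
  intro hF₀
  obtain ⟨a, b, hab⟩ := hnc
  have hV : ContDiff ℝ 1 fun p : ℝ × ℝ =>
      (p.1 * p.2 - 2 * p.1 ^ 2 + 1 / 2, 2 * p.1 * p.2 - 2 * p.1 ^ 2 + 1 / 2) := by
    fun_prop
  have hconst := ODE_solution_eq_of_vectorField_eq_zero hV (γ := fun r => (H r, F r))
    (fun r => (h.hasDerivAt_H r).prodMk (h.hasDerivAt_F r)) (t₀ := r₀)
    (by norm_num [hr₀, hF₀])
  exact hab ((congrArg Prod.fst (hconst a)).trans (congrArg Prod.fst (hconst b)).symm)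

theorem forall_ge_of_half_lt (h : IsCuspSoliton H F) {s : ℝ} (hH : 1 / 2 < H s)
    (hv : -1 < F s - 2 * H s) : ∀ t, s ≤ t → 1 / 2 < H t ∧ -1 < F t - 2 * H t := by
  have hU : IsOpen {t | 1 / 2 < H t ∧ -1 < F t - 2 * H t} :=
    (isOpen_lt continuous_const h.continuous_H).inter
      (isOpen_lt continuous_const (h.continuous_F.sub (continuous_const.mul h.continuous_H)))
  refine fun t hst => Ici_subset_of_forall_Ico_subset hU ⟨hH, hv⟩ (fun w hsw hsub => ?_) hst
  have hIoo : ∀ u ∈ Ioo s w, 1 / 2 < H u ∧ -1 < F u - 2 * H u := fun u hu =>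
    hsub ⟨hu.1.le, hu.2⟩
  -- `(exp r * (H r - 1/2))' = exp r * H r * (F r - 2 * H r + 1)`
  have hx : Real.exp s * (H s - 1 / 2) ≤ Real.exp w * (H w - 1 / 2) :=
    le_of_hasDerivAt_nonneg
      (fun r _ => (Real.hasDerivAt_exp r).mul ((h.hasDerivAt_H r).sub_const _)) hsw.le fun u hu => by
        obtain ⟨h1, h2⟩ := hIoo u hu
        have : 0 ≤ H u * (F u - 2 * H u + 1) := by nlinarith
        nlinarith [Real.exp_pos u]
  have hv' : F s - 2 * H s ≤ F w - 2 * H w :=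
    le_of_hasDerivAt_nonneg (fun r _ => h.hasDerivAt_F_sub_two_mul_H r) hsw.le fun u hu => by
      nlinarith [(hIoo u hu).1]
  refine ⟨?_, hv.trans_le hv'⟩
  have : 0 < Real.exp w * (H w - 1 / 2) := hx.trans_lt' (by have := Real.exp_pos s; nlinarith)
  linarith [pos_of_mul_pos_right this (Real.exp_pos w).le]

theorem not_bddAbove_of_half_lt (h : IsCuspSoliton H F) {s : ℝ} (hH : 1 / 2 < H s)
    (hv : -1 < F s - 2 * H s) : ¬BddAbove (range H) := by
  rintro ⟨M, hM⟩
  have hM' : ∀ t, H t ≤ M := fun t => hM (mem_range_self t)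
  have hreg := h.forall_ge_of_half_lt hH hv
  have hFs : 0 < F s := by linarith
  have hF : ∀ t, s ≤ t → F s ≤ F t := fun t hst =>
    le_of_hasDerivAt_nonneg (fun r _ => h.hasDerivAt_F r) hst fun u hu => by
      obtain ⟨h1, h2⟩ := hreg u hu.1.le
      nlinarith
  -- `(F - H)' = H F ≥ F s / 2`
  have hFH : ∀ t, s ≤ t → F s / 2 * (t - s) ≤ F t - H t - (F s - H s) := fun t hst =>
    mul_sub_le_sub_of_le_hasDerivAt (f := fun r => F r - H r)
      (fun r _ => (h.hasDerivAt_F r).sub (h.hasDerivAt_H r)) hst fun u hu => by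
        obtain ⟨h1, h2⟩ := hreg u hu.1.le
        nlinarith [hF u hu.1.le]
  set T := s + (4 * M ^ 2 + 2) / (F s / 2) with hT
  have hsT : s ≤ T := le_add_of_nonneg_right (by positivity)
  have hM0 : 0 ≤ M := by linarith [hM' s]
  -- once `F ≥ 4 M² + 2`, `H' ≥ F / 2 - 2 M² ≥ 1`
  have hgrowth : 1 * (T + M - T) ≤ H (T + M) - H T :=
    mul_sub_le_sub_of_le_hasDerivAt (fun r _ => h.hasDerivAt_H r) (by linarith) fun u hu => by
      have hsu : s ≤ u := hsT.trans hu.1.le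
      obtain ⟨h1, h2⟩ := hreg u hsu
      have hTu : 4 * M ^ 2 + 2 ≤ F s / 2 * (u - s) :=
        (div_le_iff₀' (by positivity)).1 (by linarith [hu.1, hT])
      have hFu : 4 * M ^ 2 + 2 ≤ F u := by linarith [hFH u hsu]
      have hHM : H u ^ 2 ≤ M ^ 2 := pow_le_pow_left₀ (by linarith) (hM' u) 2
      nlinarith
  linarith [hM' (T + M), (hreg T hsT).1]

theorem not_tendsto_of_half_lt (h : IsCuspSoliton H F) {s : ℝ} (hH : 1 / 2 < H s)
    (hv : F s - 2 * H s < -1) : ¬Tendsto H atBot (𝓝 (1 / 2)) := by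
  intro hbot
  set U := {t | 1 / 2 < H t ∧ F t - 2 * H t < -1}
  have hU : IsOpen U :=
    (isOpen_lt continuous_const h.continuous_H).inter
      (isOpen_lt (h.continuous_F.sub (continuous_const.mul h.continuous_H)) continuous_const)
  have hH_anti : ∀ a b, a ≤ b → Ioo a b ⊆ U → H b ≤ H a := fun a b hab hsub =>
    le_of_hasDerivAt_nonpos (fun r _ => h.hasDerivAt_H r) hab fun u hu => by
      obtain ⟨h1, h2⟩ := hsub hu
      nlinarith
  have hv_mono : ∀ a b, a ≤ b → Ioo a b ⊆ U → F a - 2 * H a ≤ F b - 2 * H b :=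
    fun a b hab hsub =>
      le_of_hasDerivAt_nonneg (fun r _ => h.hasDerivAt_F_sub_two_mul_H r) hab fun u hu => by
        nlinarith [(hsub hu).1]
  have hsU : Iic s ⊆ U := Iic_subset_of_forall_Ioc_subset hU ⟨hH, hv⟩ fun w hws hsub =>
    have hsub' := Ioo_subset_Ioc_self.trans hsub
    ⟨hH.trans_le (hH_anti w s hws.le hsub'), (hv_mono w s hws.le hsub').trans_lt hv⟩
  have : H s ≤ 1 / 2 := ge_of_tendsto hbot (eventually_atBot.2
    ⟨s, fun t hts => hH_anti t s hts fun u hu => hsU hu.2.le⟩)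
  linarith

theorem H_le_half (h : IsCuspSoliton H F) (hbdd : BddAbove (range H))
    (hbot : Tendsto H atBot (𝓝 (1 / 2))) (t : ℝ) : H t ≤ 1 / 2 := by
  by_contra! ht
  rcases lt_trichotomy (F t - 2 * H t) (-1) with hv | hv | hv
  · exact h.not_tendsto_of_half_lt ht hv hbot
  · obtain ⟨u, hvu, hHu⟩ := (((h.hasDerivAt_F_sub_two_mul_H t).eventually_lt_nhdsGT
      (by nlinarith)).and ((h.continuous_H.continuousAt.eventually (lt_mem_nhds ht)).filter_mono
        nhdsWithin_le_nhds)).exists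
    exact h.not_bddAbove_of_half_lt hHu (hv ▸ hvu) hbdd
  · exact h.not_bddAbove_of_half_lt ht hv hbdd

theorem H_lt_half (h : IsCuspSoliton H F) (hnc : ∃ r s, H r ≠ H s) (hle : ∀ r, H r ≤ 1 / 2)
    (r : ℝ) : H r < 1 / 2 := by
  refine (hle r).lt_of_ne fun hr => h.F_ne_zero_of_H_eq_half hnc hr ?_
  have hmax : IsLocalMax H r := Eventually.of_forall fun s => hr ▸ hle s
  have := hmax.hasDerivAt_eq_zero (h.hasDerivAt_H r)
  rw [hr] at this
  linarith

theorem isOpen_setOf_isPinched (h : IsCuspSoliton H F) : IsOpen {r | IsPinched H F r} :=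
  (isOpen_lt continuous_const h.continuous_H).inter <|
    (isOpen_lt h.continuous_H continuous_const).inter <|
      (isOpen_lt continuous_const h.continuous_F').inter
        (isOpen_lt h.continuous_F' continuous_const)

theorem isPinched_of_forall_Ioo (h : IsCuspSoliton H F) (hnc : ∃ r s, H r ≠ H s) {s w : ℝ}
    (hsw : s < w) (hpin : ∀ u ∈ Ioo s w, IsPinched H F u) : IsPinched H F w := by
  have hw : w ∈ closure (Ioo s w) := by
    rw [closure_Ioo hsw.ne]
    exact right_mem_Icc.2 hsw.le
  have closure_le {φ ψ : ℝ → ℝ} (hφ : Continuous φ) (hψ : Continuous ψ)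
      (hlt : ∀ u ∈ Ioo s w, φ u < ψ u) : φ w ≤ ψ w :=
    ContinuousWithinAt.closure_le hw hφ.continuousWithinAt hψ.continuousWithinAt
      fun u hu => (hlt u hu).le
  have h1 : 0 ≤ H w := closure_le continuous_const h.continuous_H fun u hu => (hpin u hu).1
  have h2 : H w ≤ 1 / 2 := closure_le h.continuous_H continuous_const fun u hu => (hpin u hu).2.1
  have h3 : -(1 / 2) ≤ 2 * H w * F w - 2 * H w ^ 2 + 1 / 2 :=
    closure_le continuous_const h.continuous_F' fun u hu => (hpin u hu).2.2.1
  have h4 : 2 * H w * F w - 2 * H w ^ 2 + 1 / 2 ≤ 0 :=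
    closure_le h.continuous_F' continuous_const fun u hu => (hpin u hu).2.2.2
  have hH0 : 0 < H w := h1.lt_of_ne fun h0 => by
    rw [← h0] at h4
    norm_num at h4
  have hH1 : H w < 1 / 2 := h2.lt_of_ne fun hw' => by
    have hd := (h.hasDerivAt_H w).nonneg_of_forall_Ioo_le hsw fun u hu =>
      hw' ▸ (hpin u hu).2.1.le
    rw [hw'] at hd h4
    exact h.F_ne_zero_of_H_eq_half hnc hw' (by linarith)
  refine ⟨hH0, hH1, h3.lt_of_ne fun hG => ?_, h4.lt_of_ne fun hG => ?_⟩
  · -- on `F' = -1/2` one has `F'' = 2 H³ > 0`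
    have hd := (h.hasDerivAt_F' w).neg.nonneg_of_forall_Ioo_le hsw fun u hu => by
      simp only [Pi.neg_apply]
      linarith [(hpin u hu).2.2.1]
    have : 0 < H w ^ 3 := by positivity
    nlinarith
  · -- on `F' = 0` one has `F'' = 2 (1/4 - H²) (F - 2 H) < 0`
    have hd := (h.hasDerivAt_F' w).nonneg_of_forall_Ioo_le hsw fun u hu => by
      linarith [(hpin u hu).2.2.2]
    have hF : F w < 0 := by nlinarith
    nlinarith [mul_pos (by nlinarith : (0 : ℝ) < 1 / 4 - H w ^ 2) (by linarith : 0 < 2 * H w - F w)]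

theorem isPinched_of_le (h : IsCuspSoliton H F) (hnc : ∃ r s, H r ≠ H s) {s t : ℝ}
    (hs : IsPinched H F s) (hst : s ≤ t) : IsPinched H F t :=
  Ici_subset_of_forall_Ico_subset h.isOpen_setOf_isPinched hs
    (fun _ hsw hsub => h.isPinched_of_forall_Ioo hnc hsw fun _ hu => hsub ⟨hu.1.le, hu.2⟩) hst

theorem exists_isPinched_le (h : IsCuspSoliton H F) (hlt : ∀ r, H r < 1 / 2)
    (hbot : Tendsto H atBot (𝓝 (1 / 2))) (r : ℝ) : ∃ s ≤ r, IsPinched H F s := by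
  obtain ⟨R, hR⟩ :=
    eventually_atBot.1 (hbot.eventually (lt_mem_nhds (by norm_num : (1 : ℝ) / 4 < 1 / 2)))
  set a := min r R
  have hH : ∀ u ≤ a, 1 / 4 < H u := fun u hu => hR u (hu.trans (min_le_right _ _))
  by_contra! hnone
  have hgap : ∀ u ∈ Iic a, 2 * H u * F u - 2 * H u ^ 2 + 1 / 2 ∉ Ioo (-(1 / 2)) 0 :=
    fun u hu hG => hnone u (mem_Iic.1 hu |>.trans (min_le_left _ _))
      ⟨(hH u hu).trans' (by norm_num), hlt u, hG.1, hG.2⟩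
  rcases isPreconnected_Iic.forall_le_or_forall_ge_of_forall_notMem_Ioo
    h.continuous_F'.continuousOn (by norm_num) hgap with hG | hG
  · -- `H' ≤ -H² < -1/16` on `(-∞, a]`
    have := sub_le_mul_sub_of_hasDerivAt_le (a := a - 8) (b := a) (C := -(1 / 16))
      (fun u _ => h.hasDerivAt_H u) (by linarith) fun u hu => by
        have h1 := hG u hu.2.le
        have h2 := hH u hu.2.le
        nlinarith
    linarith [hlt (a - 8), hH a le_rfl]
  · -- `H' ≥ 1/4 - H² > 0` on `(-∞, a]`, so `H ≤ H a < 1/2` there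
    have : 1 / 2 ≤ H a := le_of_tendsto hbot (eventually_atBot.2 ⟨a, fun u hu =>
      le_of_hasDerivAt_nonneg (fun v _ => h.hasDerivAt_H v) hu fun v hv => by
        have h1 := hG v hv.2.le
        have h2 := hH v hv.2.le
        nlinarith [hlt v]⟩)
    linarith [hlt a]

end IsCuspSoliton

theorem cusp_soliton_pinching_general
    (H F : ℝ → ℝ)
    (hH : ∀ r : ℝ, HasDerivAt H (H r * F r - 2 * H r ^ 2 + 1 / 2) r)
    (hF : ∀ r : ℝ, HasDerivAt F (2 * H r * F r - 2 * H r ^ 2 + 1 / 2) r)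
    (hHnc : ∃ r s : ℝ, H r ≠ H s)
    (hbdd : ∃ M : ℝ, ∀ r : ℝ, |H r| ≤ M)
    (hHbot : Tendsto H atBot (nhds (1 / 2))) :
    ∀ r : ℝ, 0 < H r ∧ H r < 1 / 2 ∧
      -(1 / 2) < 2 * H r * F r - 2 * H r ^ 2 + 1 / 2 ∧
      2 * H r * F r - 2 * H r ^ 2 + 1 / 2 < 0 := by
  have h : IsCuspSoliton H F := ⟨hH, hF⟩
  obtain ⟨M, hM⟩ := hbdd
  have hbdd : BddAbove (range H) := ⟨M, forall_mem_range.2 fun r => (le_abs_self _).trans (hM r)⟩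
  have hlt := h.H_lt_half hHnc (h.H_le_half hbdd hHbot)
  intro r
  obtain ⟨s, hsr, hs⟩ := h.exists_isPinched_le hlt hHbot r
  exact h.isPinched_of_le hHnc hs hsr

/-- Curvature pinching along the cusp-soliton separatrix: for a nonconstant bounded
solution of the system with `H → 1/2` as `r → −∞`, one has `0 < H < 1/2` and
`−1/2 < F' < 0` everywhere. -/
theorem cusp_soliton_pinching
    (H F : ℝ → ℝ)
    (hH : ∀ r : ℝ, HasDerivAt H (H r * F r - 2 * H r ^ 2 + 1 / 2) r)
    (hF : ∀ r : ℝ, HasDerivAt F (2 * H r * F r - 2 * H r ^ 2 + 1 / 2) r)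
    (hHnc : ∃ r s : ℝ, H r ≠ H s) (hFnc : ∃ r s : ℝ, F r ≠ F s)
    (hbdd : ∃ M : ℝ, ∀ r : ℝ, |H r| ≤ M)
    (hHbot : Tendsto H atBot (nhds (1 / 2))) :
    ∀ r : ℝ, 0 < H r ∧ H r < 1 / 2 ∧
      -(1 / 2) < 2 * H r * F r - 2 * H r ^ 2 + 1 / 2 ∧
      2 * H r * F r - 2 * H r ^ 2 + 1 / 2 < 0 :=
  cusp_soliton_pinching_general H F hH hF hHnc hbdd hHbot
end

section
/- Let u : ℝ² → ℝ be real-analytic and h : ℝ² → ℝ be smooth, both ℤ²-periodic (u(x+1, y) = u(x, y+1) = u(x, y) and likewise for h). Suppose that for all (x, y) ∈ ℝ²: ∂²u/∂x∂y = (∂u/∂y)(∂h/∂x) + (∂u/∂x)(∂h/∂y), and ∂²u/∂x² − ∂²u/∂y² = −2(∂u/∂x)(∂h/∂x) + 2(∂u/∂y)(∂h/∂y). Then u is constant. -/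
/-- Partial derivative in the first variable of a function on `ℝ × ℝ`. -/
noncomputable def pdX (f : ℝ × ℝ → ℝ) (p : ℝ × ℝ) : ℝ :=
  deriv (fun s => f (s, p.2)) p.1

/-- Partial derivative in the second variable of a function on `ℝ × ℝ`. -/
noncomputable def pdY (f : ℝ × ℝ → ℝ) (p : ℝ × ℝ) : ℝ :=
  deriv (fun s => f (p.1, s)) p.2

/-!
At a critical point of `u` the two equations give `u_xy = 0` and `u_yy = u_xx`, so the Jacobian of
`(u_x, u_y)` there is `u_xx ^ 2 ≥ 0`. On the other hand a doubly periodic map `(P, Q) : ℝ² → ℝ²`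
has degree zero: for a primitive `A` of a bump `a`, the Jacobian of `(A ∘ P, A ∘ Q)`, which is
`a(P) a(Q) jac(P, Q)`, is the divergence of a periodic field and integrates to zero over a period
square. Since `u` has a maximum, `(u_x, u_y)` has a zero; if the Jacobian were positive at every
zero, a bump `a` concentrated near `0` would make that integral positive. So some critical point
has `u_xx = 0`, where the whole Hessian vanishes; differentiating the equations then shows
inductively that all derivatives of `u` vanish there, and `u` is constant by analyticity.
-/

open Set Function MeasureTheory Filter Topology
open scoped ContDiff

section PartialDerivatives

variable {f g w : ℝ × ℝ → ℝ} {p : ℝ × ℝ} {m n : WithTop ℕ∞}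

lemma hasDerivAt_pdX (hw : DifferentiableAt ℝ w p) :
    HasDerivAt (fun s => w (s, p.2)) (pdX w p) p.1 :=
  (hw.comp p.1 (differentiableAt_id.prodMk (differentiableAt_const p.2))).hasDerivAt

lemma hasDerivAt_pdY (hw : DifferentiableAt ℝ w p) :
    HasDerivAt (fun s => w (p.1, s)) (pdY w p) p.2 :=
  (hw.comp p.2 ((differentiableAt_const p.1).prodMk differentiableAt_id)).hasDerivAt

lemma pdX_eq_fderiv (hw : DifferentiableAt ℝ w p) : pdX w p = fderiv ℝ w p (1, 0) :=
  (hw.hasFDerivAt.comp_hasDerivAt p.1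
    ((hasDerivAt_id p.1).prodMk (hasDerivAt_const p.1 p.2))).deriv

lemma pdY_eq_fderiv (hw : DifferentiableAt ℝ w p) : pdY w p = fderiv ℝ w p (0, 1) :=
  (hw.hasFDerivAt.comp_hasDerivAt p.2
    ((hasDerivAt_const p.2 p.1).prodMk (hasDerivAt_id p.2))).deriv

lemma fderiv_apply_eq_pdX_pdY (hw : DifferentiableAt ℝ w p) (v : ℝ × ℝ) :
    fderiv ℝ w p v = v.1 * pdX w p + v.2 * pdY w p := by
  have hv : v = v.1 • ((1 : ℝ), (0 : ℝ)) + v.2 • ((0 : ℝ), (1 : ℝ)) := by simp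
  rw [hv, map_add, map_smul, map_smul, pdX_eq_fderiv hw, pdY_eq_fderiv hw]
  simp

lemma ContDiff.pdX (hw : ContDiff ℝ n w) (hmn : m + 1 ≤ n) : ContDiff ℝ m (pdX w) := by
  have hd : Differentiable ℝ w := hw.differentiable (ne_bot_of_le_ne_bot (by simp) hmn)
  rw [show _root_.pdX w = fun q => fderiv ℝ w q (1, 0) from funext fun q => pdX_eq_fderiv (hd q)]
  exact (hw.fderiv_right hmn).clm_apply contDiff_const

lemma ContDiff.pdY (hw : ContDiff ℝ n w) (hmn : m + 1 ≤ n) : ContDiff ℝ m (pdY w) := by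
  have hd : Differentiable ℝ w := hw.differentiable (ne_bot_of_le_ne_bot (by simp) hmn)
  rw [show _root_.pdY w = fun q => fderiv ℝ w q (0, 1) from funext fun q => pdY_eq_fderiv (hd q)]
  exact (hw.fderiv_right hmn).clm_apply contDiff_const

lemma pdX_pdY_comm (hw : ContDiff ℝ 2 w) : pdX (pdY w) = pdY (pdX w) := by
  funext p
  have hd : Differentiable ℝ w := hw.differentiable (by simp)
  have hdd : Differentiable ℝ (fderiv ℝ w) :=
    (hw.fderiv_right (m := 1) le_rfl).differentiable (by simp)
  rw [pdX_eq_fderiv ((hw.pdY (m := 1) le_rfl).differentiable (by simp) p),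
    pdY_eq_fderiv ((hw.pdX (m := 1) le_rfl).differentiable (by simp) p),
    show pdY w = fun q => fderiv ℝ w q (0, 1) from funext fun q => pdY_eq_fderiv (hd q),
    show pdX w = fun q => fderiv ℝ w q (1, 0) from funext fun q => pdX_eq_fderiv (hd q),
    fderiv_clm_apply (hdd p) (differentiableAt_const _),
    fderiv_clm_apply (hdd p) (differentiableAt_const _)]
  simpa using hw.contDiffAt.isSymmSndFDerivAt (by simp) (1, 0) (0, 1)

lemma pdX_add (hf : Differentiable ℝ f) (hg : Differentiable ℝ g) :
    pdX (f + g) = pdX f + pdX g :=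
  funext fun p => ((hasDerivAt_pdX (hf p)).add (hasDerivAt_pdX (hg p))).deriv

lemma pdY_add (hf : Differentiable ℝ f) (hg : Differentiable ℝ g) :
    pdY (f + g) = pdY f + pdY g :=
  funext fun p => ((hasDerivAt_pdY (hf p)).add (hasDerivAt_pdY (hg p))).deriv

lemma pdY_sub (hf : Differentiable ℝ f) (hg : Differentiable ℝ g) :
    pdY (f - g) = pdY f - pdY g :=
  funext fun p => ((hasDerivAt_pdY (hf p)).sub (hasDerivAt_pdY (hg p))).deriv

lemma pdX_smul (c : ℝ) (hf : Differentiable ℝ f) : pdX (c • f) = c • pdX f :=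
  funext fun p => ((hasDerivAt_pdX (hf p)).const_smul c).deriv

lemma pdY_smul (c : ℝ) (hf : Differentiable ℝ f) : pdY (c • f) = c • pdY f :=
  funext fun p => ((hasDerivAt_pdY (hf p)).const_smul c).deriv

lemma pdX_mul (hf : Differentiable ℝ f) (hg : Differentiable ℝ g) :
    pdX (f * g) = pdX f * g + f * pdX g :=
  funext fun p => ((hasDerivAt_pdX (hf p)).mul (hasDerivAt_pdX (hg p))).deriv

lemma pdY_mul (hf : Differentiable ℝ f) (hg : Differentiable ℝ g) :
    pdY (f * g) = pdY f * g + f * pdY g :=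
  funext fun p => ((hasDerivAt_pdY (hf p)).mul (hasDerivAt_pdY (hg p))).deriv

lemma pdX_comp (A : ℝ → ℝ) (hA : DifferentiableAt ℝ A (w p)) (hw : DifferentiableAt ℝ w p) :
    pdX (A ∘ w) p = deriv A (w p) * pdX w p :=
  (hA.hasDerivAt.comp p.1 (hasDerivAt_pdX hw)).deriv

lemma pdY_comp (A : ℝ → ℝ) (hA : DifferentiableAt ℝ A (w p)) (hw : DifferentiableAt ℝ w p) :
    pdY (A ∘ w) p = deriv A (w p) * pdY w p :=
  (hA.hasDerivAt.comp p.2 (hasDerivAt_pdY hw)).deriv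

end PartialDerivatives

def VanishesToOrder (p : ℝ × ℝ) : ℕ → (ℝ × ℝ → ℝ) → Prop
  | 0, w => w p = 0
  | m + 1, w => w p = 0 ∧ VanishesToOrder p m (pdX w) ∧ VanishesToOrder p m (pdY w)

namespace VanishesToOrder

variable {p : ℝ × ℝ} {f g w : ℝ × ℝ → ℝ}

lemma eq_zero {m : ℕ} (h : VanishesToOrder p m w) : w p = 0 := by
  cases m with
  | zero => exact h
  | succ m => exact h.1

lemma mono {m : ℕ} (h : VanishesToOrder p (m + 1) w) : VanishesToOrder p m w := by
  induction m generalizing w with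
  | zero => exact h.1
  | succ m ih => exact ⟨h.1, ih h.2.1, ih h.2.2⟩

lemma add {m : ℕ} (hf : ContDiff ℝ ∞ f) (hg : ContDiff ℝ ∞ g)
    (hfm : VanishesToOrder p m f) (hgm : VanishesToOrder p m g) :
    VanishesToOrder p m (f + g) := by
  induction m generalizing f g with
  | zero => simp [VanishesToOrder, hfm.eq_zero, hgm.eq_zero]
  | succ m ih =>
    refine ⟨by simp [hfm.1, hgm.1], ?_, ?_⟩
    · rw [pdX_add (hf.differentiable (by simp)) (hg.differentiable (by simp))]
      exact ih (hf.pdX le_rfl) (hg.pdX le_rfl) hfm.2.1 hgm.2.1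
    · rw [pdY_add (hf.differentiable (by simp)) (hg.differentiable (by simp))]
      exact ih (hf.pdY le_rfl) (hg.pdY le_rfl) hfm.2.2 hgm.2.2

lemma smul {m : ℕ} (c : ℝ) (hf : ContDiff ℝ ∞ f) (hfm : VanishesToOrder p m f) :
    VanishesToOrder p m (c • f) := by
  induction m generalizing f with
  | zero => simp [VanishesToOrder, hfm.eq_zero]
  | succ m ih =>
    refine ⟨by simp [hfm.1], ?_, ?_⟩
    · rw [pdX_smul c (hf.differentiable (by simp))]
      exact ih (hf.pdX le_rfl) hfm.2.1
    · rw [pdY_smul c (hf.differentiable (by simp))]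
      exact ih (hf.pdY le_rfl) hfm.2.2

lemma sub {m : ℕ} (hf : ContDiff ℝ ∞ f) (hg : ContDiff ℝ ∞ g)
    (hfm : VanishesToOrder p m f) (hgm : VanishesToOrder p m g) :
    VanishesToOrder p m (f - g) := by
  rw [sub_eq_add_neg, ← neg_one_smul ℝ g]
  exact hfm.add hf (hg.const_smul (-1 : ℝ)) (hgm.smul (-1) hg)

lemma mul {m : ℕ} (hf : ContDiff ℝ ∞ f) (hg : ContDiff ℝ ∞ g) (hfm : VanishesToOrder p m f) :
    VanishesToOrder p m (f * g) := by
  induction m generalizing f g with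
  | zero => simp [VanishesToOrder, hfm.eq_zero]
  | succ m ih =>
    have hf' := hf.differentiable (n := ∞) (by simp)
    have hg' := hg.differentiable (n := ∞) (by simp)
    refine ⟨by simp [hfm.1], ?_, ?_⟩
    · rw [pdX_mul hf' hg']
      exact (ih (hf.pdX le_rfl) hg hfm.2.1).add ((hf.pdX le_rfl).mul hg) (hf.mul (hg.pdX le_rfl))
        (ih hf (hg.pdX le_rfl) hfm.mono)
    · rw [pdY_mul hf' hg']
      exact (ih (hf.pdY le_rfl) hg hfm.2.2).add ((hf.pdY le_rfl).mul hg) (hf.mul (hg.pdY le_rfl))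
        (ih hf (hg.pdY le_rfl) hfm.mono)

end VanishesToOrder

lemma AnalyticOnNhd.eq_of_iteratedDeriv_succ_eq_zero {𝕜 E : Type*} [RCLike 𝕜]
    [NormedAddCommGroup E] [NormedSpace 𝕜 E] [CompleteSpace E] {f : 𝕜 → E} {z : 𝕜}
    (hf : AnalyticOnNhd 𝕜 f univ) (h : ∀ n, iteratedDeriv (n + 1) f z = 0) (x y : 𝕜) :
    f x = f y := by
  have hd : AnalyticOnNhd 𝕜 (deriv f) univ := hf.deriv
  have htop : analyticOrderAt (deriv f) z = ⊤ := by
    refine ENat.eq_top_iff_forall_ge.mpr fun n =>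
      (natCast_le_analyticOrderAt_iff_iteratedDeriv_eq_zero (hd z trivial)).mpr fun i _ => ?_
    rw [← iteratedDeriv_succ']
    exact h i
  have hzero : deriv f = 0 :=
    (AnalyticOnNhd.analyticOrderAt_eq_top_iff_eq_zero z fun w => hd w trivial).mp htop
  exact is_const_of_deriv_eq_zero (fun w => (hf w trivial).differentiableAt)
    (fun w => congrFun hzero w) x y

section Flatness

variable {p : ℝ × ℝ} {u ψ : ℝ × ℝ → ℝ}

lemma VanishesToOrder.fderiv_apply {m : ℕ} (hψ : ContDiff ℝ ∞ ψ)
    (hx : VanishesToOrder p m (pdX ψ)) (hy : VanishesToOrder p m (pdY ψ)) (v : ℝ × ℝ) :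
    VanishesToOrder p m (fun q => fderiv ℝ ψ q v) := by
  have hψ' : Differentiable ℝ ψ := hψ.differentiable (by simp)
  rw [show (fun q => fderiv ℝ ψ q v) = v.1 • pdX ψ + v.2 • pdY ψ from
    funext fun q => by simp [fderiv_apply_eq_pdX_pdY (hψ' q)]]
  exact (hx.smul v.1 (hψ.pdX le_rfl)).add ((hψ.pdX le_rfl).const_smul v.1)
    ((hψ.pdY le_rfl).const_smul v.2) (hy.smul v.2 (hψ.pdY le_rfl))

lemma iteratedDeriv_comp_add_smul (hψ : ContDiff ℝ ∞ ψ) (p v : ℝ × ℝ) (n : ℕ) :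
    iteratedDeriv n (fun s : ℝ => ψ (p + s • v))
      = fun s => (fun φ q => fderiv ℝ φ q v)^[n] ψ (p + s • v) := by
  induction n generalizing ψ with
  | zero => simp
  | succ n ih =>
    have hderiv : deriv (fun s : ℝ => ψ (p + s • v)) = fun s => fderiv ℝ ψ (p + s • v) v := by
      funext s
      have hline : HasDerivAt (fun s : ℝ => p + s • v) v s := by
        simpa using ((hasDerivAt_id s).smul_const v).const_add p
      exact ((hψ.differentiable (by simp) _).hasFDerivAt.comp_hasDerivAt s hline).deriv
    rw [iteratedDeriv_succ', hderiv, Function.iterate_succ_apply]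
    exact ih ((hψ.fderiv_right le_rfl).clm_apply contDiff_const)

lemma eq_of_forall_vanishesToOrder_pdX_pdY (hu : AnalyticOnNhd ℝ u univ)
    (h : ∀ m, VanishesToOrder p m (pdX u) ∧ VanishesToOrder p m (pdY u)) (q : ℝ × ℝ) :
    u q = u p := by
  have hus : ContDiff ℝ ∞ u := hu.contDiff
  set v := q - p
  set D : (ℝ × ℝ → ℝ) → ℝ × ℝ → ℝ := fun φ q => fderiv ℝ φ q v
  have hDs : ∀ n, ContDiff ℝ ∞ (D^[n] (D u)) := by
    intro n
    induction n with
    | zero => exact (hus.fderiv_right le_rfl).clm_apply contDiff_const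
    | succ n ih =>
      rw [Function.iterate_succ_apply']
      exact (ih.fderiv_right le_rfl).clm_apply contDiff_const
  have hflat : ∀ n m, VanishesToOrder p m (D^[n] (D u)) := by
    intro n
    induction n with
    | zero => exact fun m => (h m).1.fderiv_apply hus (h m).2 v
    | succ n ih =>
      intro m
      rw [Function.iterate_succ_apply']
      exact (ih (m + 1)).2.1.fderiv_apply (hDs n) (ih (m + 1)).2.2 v
  have hline : AnalyticOnNhd ℝ (fun s : ℝ => u (p + s • v)) univ :=
    hu.comp (fun s _ => by fun_prop) (mapsTo_univ _ _)
  have := hline.eq_of_iteratedDeriv_succ_eq_zero (z := 0) (fun n => by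
    rw [iteratedDeriv_comp_add_smul hus, Function.iterate_succ_apply]
    simpa using (hflat n 0).eq_zero) 1 0
  simpa [v] using this

end Flatness

lemma Function.Periodic.deriv {𝕜 F : Type*} [NontriviallyNormedField 𝕜] [NormedAddCommGroup F]
    [NormedSpace 𝕜 F] {f : 𝕜 → F} {c : 𝕜} (h : Periodic f c) : Periodic (deriv f) c := fun x => by
  rw [← deriv_comp_add_const, show (fun x => f (x + c)) = f from funext h]

def DoublyPeriodic {α : Type*} (w : ℝ × ℝ → α) : Prop :=
  ∀ x y : ℝ, w (x + 1, y) = w (x, y) ∧ w (x, y + 1) = w (x, y)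

namespace DoublyPeriodic

variable {α β : Type*}

lemma comp {w : ℝ × ℝ → α} (hw : DoublyPeriodic w) (A : α → β) : DoublyPeriodic (A ∘ w) :=
  fun x y => ⟨congrArg A (hw x y).1, congrArg A (hw x y).2⟩

lemma mul [Mul α] {f g : ℝ × ℝ → α} (hf : DoublyPeriodic f) (hg : DoublyPeriodic g) :
    DoublyPeriodic (f * g) :=
  fun x y => ⟨by simp [(hf x y).1, (hg x y).1], by simp [(hf x y).2, (hg x y).2]⟩

lemma pdX {w : ℝ × ℝ → ℝ} (hw : DoublyPeriodic w) : DoublyPeriodic (pdX w) := fun x y =>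
  ⟨(Periodic.deriv (fun s => (hw s y).1)) x,
    congrArg (deriv · x) (funext fun s => (hw s y).2)⟩

lemma pdY {w : ℝ × ℝ → ℝ} (hw : DoublyPeriodic w) : DoublyPeriodic (pdY w) := fun x y =>
  ⟨congrArg (deriv · y) (funext fun t => (hw x t).1),
    (Periodic.deriv (fun t => (hw x t).2)) y⟩

lemma exists_forall_ge [LinearOrder α] [TopologicalSpace α] [ClosedIciTopology α]
    {w : ℝ × ℝ → α} (hw : DoublyPeriodic w) (hc : Continuous w) :
    ∃ p, ∀ q, w q ≤ w p := by
  obtain ⟨p, -, hp⟩ := (isCompact_Icc.prod isCompact_Icc).exists_isMaxOn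
    ⟨((0 : ℝ), (0 : ℝ)), by simp⟩ hc.continuousOn (s := Icc (0 : ℝ) 1 ×ˢ Icc (0 : ℝ) 1)
  refine ⟨p, fun q => ?_⟩
  obtain ⟨x, hx, hqx⟩ :=
    Periodic.exists_mem_Ico₀ (f := fun s => w (s, q.2)) (fun s => (hw s q.2).1) one_pos q.1
  obtain ⟨y, hy, hxy⟩ :=
    Periodic.exists_mem_Ico₀ (f := fun t => w (x, t)) (fun t => (hw x t).2) one_pos q.2
  calc w q = w (x, y) := hqx.trans hxy
    _ ≤ w p := hp ⟨Ico_subset_Icc_self hx, Ico_subset_Icc_self hy⟩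

end DoublyPeriodic

lemma IsLocalMax.pdX_eq_zero {w : ℝ × ℝ → ℝ} {p : ℝ × ℝ} (h : IsLocalMax w p) : pdX w p = 0 :=
  IsLocalMax.deriv_eq_zero (h.comp_continuous (by fun_prop : ContinuousAt (·, p.2) p.1))

lemma IsLocalMax.pdY_eq_zero {w : ℝ × ℝ → ℝ} {p : ℝ × ℝ} (h : IsLocalMax w p) : pdY w p = 0 :=
  IsLocalMax.deriv_eq_zero (h.comp_continuous (by fun_prop : ContinuousAt (p.1, ·) p.2))

section PeriodicIntegrals

variable {G : ℝ × ℝ → ℝ}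

lemma integral_pdX_eq_zero_of_periodic (hG : ContDiff ℝ 1 G)
    (hper : ∀ y, Periodic (fun x => G (x, y)) 1) (c d e : ℝ) :
    ∫ p in Icc c (c + 1) ×ˢ Icc d e, pdX G p = 0 := by
  have hcont : Continuous (pdX G) := (hG.pdX (m := 0) le_rfl).continuous
  have hint : IntegrableOn (pdX G) (Icc c (c + 1) ×ˢ Icc d e) :=
    hcont.continuousOn.integrableOn_compact (isCompact_Icc.prod isCompact_Icc)
  rw [Measure.volume_eq_prod] at hint ⊢
  rw [setIntegral_prod _ hint, integral_integral_swap (by rw [Measure.prod_restrict]; exact hint)]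
  have hslice : ∀ y, ∫ x in Icc c (c + 1), pdX G (x, y) = 0 := fun y => by
    rw [integral_Icc_eq_integral_Ioc, ← intervalIntegral.integral_of_le (by linarith),
      intervalIntegral.integral_eq_sub_of_hasDerivAt (f := fun x => G (x, y))
        (f' := fun x => pdX G (x, y))
        (fun x _ => hasDerivAt_pdX (p := (x, y)) (hG.differentiable (by simp) _))
        ((hcont.comp (continuous_id.prodMk continuous_const)).intervalIntegrable _ _),
      sub_eq_zero.mpr (hper y c)]
  simp [hslice]

lemma integral_pdY_eq_zero_of_periodic (hG : ContDiff ℝ 1 G)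
    (hper : ∀ x, Periodic (fun y => G (x, y)) 1) (c e d : ℝ) :
    ∫ p in Icc c e ×ˢ Icc d (d + 1), pdY G p = 0 := by
  have hcont : Continuous (pdY G) := (hG.pdY (m := 0) le_rfl).continuous
  have hint : IntegrableOn (pdY G) (Icc c e ×ˢ Icc d (d + 1)) :=
    hcont.continuousOn.integrableOn_compact (isCompact_Icc.prod isCompact_Icc)
  rw [Measure.volume_eq_prod] at hint ⊢
  rw [setIntegral_prod _ hint]
  have hslice : ∀ x, ∫ y in Icc d (d + 1), pdY G (x, y) = 0 := fun x => by
    rw [integral_Icc_eq_integral_Ioc, ← intervalIntegral.integral_of_le (by linarith),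
      intervalIntegral.integral_eq_sub_of_hasDerivAt (f := fun y => G (x, y))
        (f' := fun y => pdY G (x, y))
        (fun y _ => hasDerivAt_pdY (p := (x, y)) (hG.differentiable (by simp) _))
        ((hcont.comp (continuous_const.prodMk continuous_id)).intervalIntegrable _ _),
      sub_eq_zero.mpr (hper x d)]
  simp [hslice]

end PeriodicIntegrals

noncomputable def jacobian (P Q : ℝ × ℝ → ℝ) : ℝ × ℝ → ℝ := pdX P * pdY Q - pdY P * pdX Q

section Jacobian

variable {P Q : ℝ × ℝ → ℝ}

lemma jacobian_eq_pdX_sub_pdY (hP : Differentiable ℝ P) (hQ : ContDiff ℝ 2 Q) :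
    jacobian P Q = pdX (P * pdY Q) - pdY (P * pdX Q) := by
  rw [pdX_mul hP ((hQ.pdY (m := 1) le_rfl).differentiable (by simp)),
    pdY_mul hP ((hQ.pdX (m := 1) le_rfl).differentiable (by simp)), pdX_pdY_comm hQ, jacobian]
  ring

lemma jacobian_comp {A : ℝ → ℝ} (hA : Differentiable ℝ A) (hP : Differentiable ℝ P)
    (hQ : Differentiable ℝ Q) :
    jacobian (A ∘ P) (A ∘ Q) = (deriv A ∘ P) * (deriv A ∘ Q) * jacobian P Q := by
  funext p
  simp only [jacobian, Pi.sub_apply, Pi.mul_apply, comp_apply, pdX_comp A (hA _) (hP p),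
    pdY_comp A (hA _) (hP p), pdX_comp A (hA _) (hQ p), pdY_comp A (hA _) (hQ p)]
  ring

lemma integral_jacobian_eq_zero_of_doublyPeriodic (hP : ContDiff ℝ 2 P) (hQ : ContDiff ℝ 2 Q)
    (hPper : DoublyPeriodic P) (hQper : DoublyPeriodic Q) (c d : ℝ) :
    ∫ p in Icc c (c + 1) ×ˢ Icc d (d + 1), jacobian P Q p = 0 := by
  have hX : ContDiff ℝ 1 (P * pdY Q) := (hP.of_le (by norm_cast)).mul (hQ.pdY le_rfl)
  have hY : ContDiff ℝ 1 (P * pdX Q) := (hP.of_le (by norm_cast)).mul (hQ.pdX le_rfl)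
  have hXper := hPper.mul hQper.pdY
  have hYper := hPper.mul hQper.pdX
  have hK : IsCompact (Icc c (c + 1) ×ˢ Icc d (d + 1)) := isCompact_Icc.prod isCompact_Icc
  rw [jacobian_eq_pdX_sub_pdY (hP.differentiable (by simp)) hQ, Pi.sub_def,
    integral_sub ((hX.pdX (m := 0) le_rfl).continuous.continuousOn.integrableOn_compact hK)
      ((hY.pdY (m := 0) le_rfl).continuous.continuousOn.integrableOn_compact hK),
    integral_pdX_eq_zero_of_periodic hX (fun y x => (hXper x y).1),
    integral_pdY_eq_zero_of_periodic hY (fun x y => (hYper x y).2), sub_self]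

end Jacobian

lemma contDiff_intervalIntegral {f : ℝ → ℝ} {n : ℕ∞} (hf : ContDiff ℝ n f) (a : ℝ) :
    ContDiff ℝ (n + 1) (fun t => ∫ s in a..t, f s) := by
  have hderiv : ∀ t, HasDerivAt (fun t => ∫ s in a..t, f s) (f t) t := fun t =>
    (hf.continuous.integral_hasStrictDerivAt a t).hasDerivAt
  refine contDiff_succ_iff_deriv.mpr ⟨fun t => (hderiv t).differentiableAt, by simp, ?_⟩
  rwa [show deriv (fun t => ∫ s in a..t, f s) = f from funext fun t => (hderiv t).deriv]

lemma setIntegral_pos_of_nonneg_of_mem_interior {X : Type*} [TopologicalSpace X] [T2Space X]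
    [MeasurableSpace X] [OpensMeasurableSpace X] {μ : Measure X} [μ.IsOpenPosMeasure]
    [IsFiniteMeasureOnCompacts μ] {g : X → ℝ} {K : Set X} {x : X} (hK : IsCompact K)
    (hg : Continuous g) (hnonneg : ∀ y ∈ K, 0 ≤ g y) (hx : x ∈ interior K) (hgx : 0 < g x) :
    0 < ∫ y in K, g y ∂μ := by
  rw [setIntegral_pos_iff_support_of_nonneg_ae
    ((ae_restrict_iff' hK.measurableSet).mpr (Eventually.of_forall hnonneg))
    (hg.continuousOn.integrableOn_compact hK)]
  refine ((hg.isOpen_support.inter isOpen_interior).measure_pos μ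
    ⟨x, hgx.ne', hx⟩).trans_le (measure_mono (inter_subset_inter_right _ interior_subset))

lemma IsCompact.exists_pos_forall_norm_lt_imp_pos {X E : Type*} [TopologicalSpace X]
    [NormedAddCommGroup E] {K : Set X} (hK : IsCompact K) {F : X → E} {j : X → ℝ}
    (hF : Continuous F) (hj : Continuous j) (h : ∀ x ∈ K, F x = 0 → 0 < j x) :
    ∃ δ > 0, ∀ x ∈ K, ‖F x‖ < δ → 0 < j x := by
  obtain ⟨δ, hδ, hδK⟩ := (hK.inter_right (isClosed_le hj continuous_const)).exists_forall_le'
    hF.norm.continuousOn (a := 0) fun x hx =>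
      norm_pos_iff.mpr fun h0 => (h x hx.1 h0).not_ge hx.2
  exact ⟨δ, hδ, fun x hx hlt => not_le.mp fun hle => (hδK x ⟨hx, hle⟩).not_gt hlt⟩

lemma exists_contDiff_deriv_bump {r : ℝ} (hr : 0 < r) :
    ∃ A : ℝ → ℝ, ContDiff ℝ ∞ A ∧ (∀ t, 0 ≤ deriv A t) ∧ (∀ t, deriv A t ≠ 0 → |t| < r) ∧
      0 < deriv A 0 := by
  let a : ContDiffBump (0 : ℝ) := ⟨r / 2, r, by positivity, by linarith⟩
  have hA' : deriv (fun t => ∫ s in (0 : ℝ)..t, a s) = a := funext fun t =>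
    (a.continuous.integral_hasStrictDerivAt 0 t).hasDerivAt.deriv
  refine ⟨fun t => ∫ s in (0 : ℝ)..t, a s, contDiff_intervalIntegral (n := ⊤) a.contDiff 0, ?_⟩
  rw [hA']
  refine ⟨fun t => a.nonneg, fun t ht => ?_, ?_⟩
  · have ht : t ∈ support a := ht
    rw [a.support_eq] at ht
    simpa [Real.dist_eq] using ht
  · rw [a.one_of_mem_closedBall (by simp; positivity)]
    exact one_pos

lemma exists_jacobian_nonpos_of_doublyPeriodic {P Q : ℝ × ℝ → ℝ} (hP : ContDiff ℝ 2 P)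
    (hQ : ContDiff ℝ 2 Q) (hPper : DoublyPeriodic P) (hQper : DoublyPeriodic Q) {p₀ : ℝ × ℝ}
    (hP₀ : P p₀ = 0) (hQ₀ : Q p₀ = 0) : ∃ p, P p = 0 ∧ Q p = 0 ∧ jacobian P Q p ≤ 0 := by
  by_contra! hpos
  set K := Icc (p₀.1 - 2⁻¹) (p₀.1 - 2⁻¹ + 1) ×ˢ Icc (p₀.2 - 2⁻¹) (p₀.2 - 2⁻¹ + 1)
  have hK : IsCompact K := isCompact_Icc.prod isCompact_Icc
  have hjac : Continuous (jacobian P Q) :=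
    ((hP.pdX (m := 1) le_rfl).continuous.mul (hQ.pdY (m := 1) le_rfl).continuous).sub
      ((hP.pdY (m := 1) le_rfl).continuous.mul (hQ.pdX (m := 1) le_rfl).continuous)
  obtain ⟨δ, hδ, hδK⟩ := hK.exists_pos_forall_norm_lt_imp_pos
    (hP.continuous.prodMk hQ.continuous) hjac
    fun p _ h0 => hpos p (congrArg Prod.fst h0) (congrArg Prod.snd h0)
  obtain ⟨A, hA, hA'nonneg, hA'supp, hA'0⟩ := exists_contDiff_deriv_bump (half_pos hδ)
  have hzero : ∫ p in K, jacobian (A ∘ P) (A ∘ Q) p = 0 :=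
    integral_jacobian_eq_zero_of_doublyPeriodic (hA.of_le (by norm_cast) |>.comp hP)
      (hA.of_le (by norm_cast) |>.comp hQ) (hPper.comp A) (hQper.comp A) _ _
  rw [jacobian_comp (hA.differentiable (by simp)) (hP.differentiable (by simp))
    (hQ.differentiable (by simp))] at hzero
  have hA'c : Continuous (deriv A) := hA.continuous_deriv (by simp)
  refine hzero.not_gt (setIntegral_pos_of_nonneg_of_mem_interior (x := p₀) hK
    ((hA'c.comp hP.continuous).mul (hA'c.comp hQ.continuous) |>.mul hjac)
    (fun p hp => ?_) ?_ ?_)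
  · by_cases hne : deriv A (P p) * deriv A (Q p) = 0
    · simp [hne]
    have hsmall : ‖(P p, Q p)‖ < δ := by
      rw [Prod.norm_def, Real.norm_eq_abs, Real.norm_eq_abs]
      exact max_lt (by linarith [hA'supp _ (left_ne_zero_of_mul hne)])
        (by linarith [hA'supp _ (right_ne_zero_of_mul hne)])
    exact mul_nonneg (mul_nonneg (hA'nonneg _) (hA'nonneg _)) (hδK p hp hsmall).le
  · rw [interior_prod_eq, interior_Icc, interior_Icc]
    constructor <;> constructor <;> linarith
  · simpa [hP₀, hQ₀, hA'0] using mul_pos (mul_pos hA'0 hA'0) (hpos p₀ hP₀ hQ₀)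

section SolitonSystem

variable {u h : ℝ × ℝ → ℝ} {p : ℝ × ℝ}

lemma vanishesToOrder_succ_succ_of_pde (hu : ContDiff ℝ ∞ u) (hh : ContDiff ℝ ∞ h)
    (heq1 : ∀ q, pdX (pdY u) q = pdY u q * pdX h q + pdX u q * pdY h q)
    (heq2 : ∀ q,
      pdX (pdX u) q - pdY (pdY u) q = -2 * pdX u q * pdX h q + 2 * pdY u q * pdY h q)
    {m : ℕ} (hx : VanishesToOrder p (m + 1) (pdX u)) (hy : VanishesToOrder p (m + 1) (pdY u)) :
    VanishesToOrder p (m + 2) (pdX u) ∧ VanishesToOrder p (m + 2) (pdY u) := by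
  have hux : ContDiff ℝ ∞ (pdX u) := hu.pdX le_rfl
  have huy : ContDiff ℝ ∞ (pdY u) := hu.pdY le_rfl
  have hhx : ContDiff ℝ ∞ (pdX h) := hh.pdX le_rfl
  have hhy : ContDiff ℝ ∞ (pdY h) := hh.pdY le_rfl
  set G := pdY u * pdX h + pdX u * pdY h
  set R := (-2 : ℝ) • (pdX u * pdX h) + (2 : ℝ) • (pdY u * pdY h)
  have hGs : ContDiff ℝ ∞ G := (huy.mul hhx).add (hux.mul hhy)
  have hRs : ContDiff ℝ ∞ R :=
    ((hux.mul hhx).const_smul (-2 : ℝ)).add ((huy.mul hhy).const_smul (2 : ℝ))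
  have hxy : pdX (pdY u) = G := funext heq1
  have hyx : pdY (pdX u) = G := (pdX_pdY_comm (hu.of_le (by norm_cast))).symm.trans hxy
  have hxx : pdX (pdX u) = pdY (pdY u) + R := funext fun q => by
    simp only [R, Pi.add_apply, Pi.smul_apply, Pi.mul_apply, smul_eq_mul]
    linarith [heq2 q]
  have hxyy : pdX (pdY (pdY u)) = pdY G := by
    rw [pdX_pdY_comm (huy.of_le (by norm_cast)), hxy]
  have hyyy : pdY (pdY (pdY u)) = pdX G - pdY R := by
    rw [eq_sub_of_add_eq hxx.symm, pdY_sub ((hux.pdX le_rfl).differentiable (n := ∞) (by simp))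
      (hRs.differentiable (by simp)), ← pdX_pdY_comm (hux.of_le (by norm_cast)), hyx]
  have vG : VanishesToOrder p (m + 1) G :=
    (hy.mul huy hhx).add (huy.mul hhx) (hux.mul hhy) (hx.mul hux hhy)
  have vR : VanishesToOrder p (m + 1) R :=
    ((hx.mul hux hhx).smul (-2) (hux.mul hhx)).add ((hux.mul hhx).const_smul (-2 : ℝ))
      ((huy.mul hhy).const_smul (2 : ℝ)) ((hy.mul huy hhy).smul 2 (huy.mul hhy))
  have vyy : VanishesToOrder p (m + 1) (pdY (pdY u)) :=
    ⟨hy.2.2.eq_zero, hxyy ▸ vG.2.2, hyyy ▸ vG.2.1.sub (hGs.pdX le_rfl) (hRs.pdY le_rfl) vR.2.2⟩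
  have vxx : VanishesToOrder p (m + 1) (pdX (pdX u)) := hxx ▸ vyy.add (huy.pdY le_rfl) hRs vR
  exact ⟨⟨hx.eq_zero, vxx, hyx ▸ vG⟩, ⟨hy.eq_zero, hxy ▸ vG, vyy⟩⟩

lemma vanishesToOrder_pdX_pdY_of_pde (hu : ContDiff ℝ ∞ u) (hh : ContDiff ℝ ∞ h)
    (heq1 : ∀ q, pdX (pdY u) q = pdY u q * pdX h q + pdX u q * pdY h q)
    (heq2 : ∀ q,
      pdX (pdX u) q - pdY (pdY u) q = -2 * pdX u q * pdX h q + 2 * pdY u q * pdY h q)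
    (hx : pdX u p = 0) (hy : pdY u p = 0) (hxx : pdX (pdX u) p = 0) (m : ℕ) :
    VanishesToOrder p m (pdX u) ∧ VanishesToOrder p m (pdY u) := by
  have hxy : pdX (pdY u) p = 0 := by rw [heq1 p, hx, hy]; ring
  have hyx : pdY (pdX u) p = 0 := by rwa [← pdX_pdY_comm (hu.of_le (by norm_cast))]
  have hyy : pdY (pdY u) p = 0 := by
    have := heq2 p
    rw [hx, hy, hxx] at this
    linarith
  have key : ∀ m, VanishesToOrder p (m + 1) (pdX u) ∧ VanishesToOrder p (m + 1) (pdY u) := by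
    intro m
    induction m with
    | zero => exact ⟨⟨hx, hxx, hyx⟩, ⟨hy, hxy, hyy⟩⟩
    | succ m ih => exact vanishesToOrder_succ_succ_of_pde hu hh heq1 heq2 ih.1 ih.2
  exact ⟨(key m).1.mono, (key m).2.mono⟩

lemma jacobian_pdX_pdY_of_pde (hu : ContDiff ℝ 2 u)
    (heq1 : pdX (pdY u) p = pdY u p * pdX h p + pdX u p * pdY h p)
    (heq2 : pdX (pdX u) p - pdY (pdY u) p = -2 * pdX u p * pdX h p + 2 * pdY u p * pdY h p)
    (hx : pdX u p = 0) (hy : pdY u p = 0) :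
    jacobian (pdX u) (pdY u) p = pdX (pdX u) p ^ 2 := by
  rw [hx, hy] at heq1 heq2
  have hyy : pdY (pdY u) p = pdX (pdX u) p := by linarith
  simp only [jacobian, Pi.sub_apply, Pi.mul_apply, hyy, ← pdX_pdY_comm hu, heq1]
  ring

end SolitonSystem

theorem periodic_analytic_system_constant_general
    (u h : ℝ × ℝ → ℝ)
    (huan : AnalyticOnNhd ℝ u Set.univ)
    (hhsm : ContDiff ℝ (⊤ : ℕ∞) h)
    (huper : ∀ x y : ℝ, u (x + 1, y) = u (x, y) ∧ u (x, y + 1) = u (x, y))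
    (heq1 : ∀ p : ℝ × ℝ, pdX (pdY u) p = pdY u p * pdX h p + pdX u p * pdY h p)
    (heq2 : ∀ p : ℝ × ℝ,
      pdX (pdX u) p - pdY (pdY u) p = -2 * pdX u p * pdX h p + 2 * pdY u p * pdY h p) :
    ∀ p q : ℝ × ℝ, u p = u q := by
  have hu : ContDiff ℝ ∞ u := huan.contDiff
  have hper : DoublyPeriodic u := huper
  obtain ⟨pmax, hmax⟩ := hper.exists_forall_ge hu.continuous
  have hcrit : IsLocalMax u pmax := Eventually.of_forall hmax
  obtain ⟨p, hx, hy, hjac⟩ := exists_jacobian_nonpos_of_doublyPeriodic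
    (hu.pdX (by norm_cast)) (hu.pdY (by norm_cast)) hper.pdX hper.pdY
    hcrit.pdX_eq_zero hcrit.pdY_eq_zero
  rw [jacobian_pdX_pdY_of_pde (hu.of_le (by norm_cast)) (heq1 p) (heq2 p) hx hy] at hjac
  have hxx : pdX (pdX u) p = 0 := pow_eq_zero_iff two_ne_zero |>.mp (le_antisymm hjac (sq_nonneg _))
  have hflat := vanishesToOrder_pdX_pdY_of_pde hu hhsm heq1 heq2 hx hy hxx
  intro q q'
  rw [eq_of_forall_vanishesToOrder_pdX_pdY huan hflat q,
    eq_of_forall_vanishesToOrder_pdX_pdY huan hflat q']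

/-- If `u` is real-analytic and `h` is smooth on `ℝ²`, both `ℤ²`-periodic, and they
satisfy `u_{xy} = u_y h_x + u_x h_y` and `u_{xx} − u_{yy} = −2 u_x h_x + 2 u_y h_y`
everywhere, then `u` is constant. -/
theorem periodic_analytic_system_constant
    (u h : ℝ × ℝ → ℝ)
    (huan : AnalyticOnNhd ℝ u Set.univ)
    (hhsm : ContDiff ℝ (⊤ : ℕ∞) h)
    (huper : ∀ x y : ℝ, u (x + 1, y) = u (x, y) ∧ u (x, y + 1) = u (x, y))
    (hhper : ∀ x y : ℝ, h (x + 1, y) = h (x, y) ∧ h (x, y + 1) = h (x, y))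
    (heq1 : ∀ p : ℝ × ℝ, pdX (pdY u) p = pdY u p * pdX h p + pdX u p * pdY h p)
    (heq2 : ∀ p : ℝ × ℝ,
      pdX (pdX u) p - pdY (pdY u) p = -2 * pdX u p * pdX h p + 2 * pdY u p * pdY h p) :
    ∀ p q : ℝ × ℝ, u p = u q :=
  periodic_analytic_system_constant_general u h huan hhsm huper heq1 heq2
end

section
/- Let A > 0, C > 0, α > 0, and let h : [0, A) → ℝ be twice continuously differentiable with h(0) = 0, h'(0) = α/(2π), h(r) > 0 for r ∈ (0, A), and |h''(r)| ≤ C·h(r) for all r ∈ [0, A). Then there exist C' > 0 and r₀ ∈ (0, A) such that for all r ∈ (0, r₀): |h(r) − (α/(2π))·r| ≤ C'·r³ and |r·h'(r)/h(r) − 1| ≤ C'·r². -/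
/-!
By compactness `|h'| ≤ M` near `0`, so `|h r| ≤ M r` and the curvature bound gives
`|h''| ≤ C M r`. Integrating twice from the initial values yields `|h' - β| ≤ (C M / 2) r²` and
`|h - β r| ≤ (C M / 6) r³`, where `β = α / 2π`. The second estimate follows because
`r h' - h = r (h' - β) - (h - β r) = O(r³)`, while `h ≥ β r / 2` for small `r`.
-/

open Set

section

variable {E : Type*} [NormedAddCommGroup E] [NormedSpace ℝ E] {f f' : ℝ → E} {a b c : ℝ}

theorem continuousOn_Icc_of_hasDerivWithinAt_Ico (hcb : c < b)
    (hf : ∀ x ∈ Ico a b, HasDerivWithinAt f (f' x) (Ico a b) x) : ContinuousOn f (Icc a c) :=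
  fun x hx ↦ ((hf x ⟨hx.1, hx.2.trans_lt hcb⟩).continuousWithinAt).mono
    (Icc_subset_Ico_right hcb)

theorem hasDerivWithinAt_Ici_of_hasDerivWithinAt_Ico (hcb : c ≤ b)
    (hf : ∀ x ∈ Ico a b, HasDerivWithinAt f (f' x) (Ico a b) x) :
    ∀ x ∈ Ico a c, HasDerivWithinAt f (f' x) (Ici x) x := fun x hx ↦
  have hx' : x ∈ Ico a b := ⟨hx.1, hx.2.trans_le hcb⟩
  (hf x hx').mono_of_mem_nhdsWithin (Ico_mem_nhdsGE_of_mem hx')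

theorem norm_le_mul_pow_of_norm_deriv_le_mul_pow {K : ℝ} (n : ℕ) (hf : ContinuousOn f (Icc 0 b))
    (hf' : ∀ x ∈ Ico 0 b, HasDerivWithinAt f (f' x) (Ici x) x) (hf0 : f 0 = 0)
    (bound : ∀ x ∈ Ico 0 b, ‖f' x‖ ≤ K * x ^ n) :
    ∀ x ∈ Icc 0 b, ‖f x‖ ≤ K / (n + 1) * x ^ (n + 1) := by
  refine image_norm_le_of_norm_deriv_right_le_deriv_boundary hf hf' (by simp [hf0])
    (fun x ↦ ?_) bound
  refine ((hasDerivAt_pow (n + 1) x).const_mul (K / (n + 1))).congr_deriv ?_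
  rw [Nat.add_sub_cancel, Nat.cast_succ]
  field_simp

end

theorem abs_mul_div_sub_one_le {β K r u v : ℝ} (hβ : 0 < β) (hr : 0 < r)
    (hu : |u - β * r| ≤ K * r ^ 3) (hv : |v - β| ≤ K * r ^ 2) (hsmall : K * r ^ 2 ≤ β / 2) :
    |r * v / u - 1| ≤ 4 * K / β * r ^ 2 := by
  have hK : 0 ≤ K := nonneg_of_mul_nonneg_left ((abs_nonneg _).trans hv) (by positivity)
  have hu_low : β / 2 * r ≤ u := by nlinarith [(abs_le.1 hu).1]
  have hu0 : 0 < u := lt_of_lt_of_le (by positivity) hu_low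
  have hnum : |r * v - u| ≤ 2 * K * r ^ 3 :=
    calc |r * v - u| = |r * (v - β) - (u - β * r)| := by ring_nf
      _ ≤ r * |v - β| + |u - β * r| := by
        rw [← abs_of_pos hr, ← abs_mul, abs_of_pos hr]; exact abs_sub _ _
      _ ≤ r * (K * r ^ 2) + K * r ^ 3 := by gcongr
      _ = 2 * K * r ^ 3 := by ring
  rw [show r * v / u - 1 = (r * v - u) / u by field_simp, abs_div, abs_of_pos hu0,
    div_le_iff₀ hu0]
  calc |r * v - u| ≤ 2 * K * r ^ 3 := hnum
    _ = 4 * K / β * r ^ 2 * (β / 2 * r) := by field_simp; ring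
    _ ≤ 4 * K / β * r ^ 2 * u := by gcongr

theorem taylor_remainders_le_of_abs_deriv2_le_mul_abs {h h' h'' : ℝ → ℝ} {b C M β : ℝ}
    (hC : 0 ≤ C) (hch : ContinuousOn h (Icc 0 b)) (hch' : ContinuousOn h' (Icc 0 b))
    (hdh : ∀ x ∈ Ico 0 b, HasDerivWithinAt h (h' x) (Ici x) x)
    (hdh' : ∀ x ∈ Ico 0 b, HasDerivWithinAt h' (h'' x) (Ici x) x)
    (h0 : h 0 = 0) (h'0 : h' 0 = β) (hM : ∀ x ∈ Icc 0 b, |h' x| ≤ M)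
    (hcurv : ∀ x ∈ Ico 0 b, |h'' x| ≤ C * |h x|) :
    ∀ x ∈ Icc 0 b, |h' x - β| ≤ C * M / 2 * x ^ 2 ∧ |h x - β * x| ≤ C * M / 6 * x ^ 3 := by
  have hh : ∀ x ∈ Icc 0 b, |h x| ≤ M * x := by
    simpa using norm_le_mul_pow_of_norm_deriv_le_mul_pow 0 hch hdh h0
      (by simpa using fun x hx ↦ hM x (Ico_subset_Icc_self hx))
  have hh'' : ∀ x ∈ Ico 0 b, |h'' x| ≤ C * M * x := fun x hx ↦
    calc |h'' x| ≤ C * |h x| := hcurv x hx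
      _ ≤ C * (M * x) := by gcongr; exact hh x (Ico_subset_Icc_self hx)
      _ = C * M * x := by ring
  have hh' : ∀ x ∈ Icc 0 b, |h' x - β| ≤ C * M / 2 * x ^ 2 := by
    have := norm_le_mul_pow_of_norm_deriv_le_mul_pow 1 (hch'.sub continuousOn_const)
      (fun x hx ↦ (hdh' x hx).sub_const β) (by simp [h'0]) (by simpa using hh'')
    norm_num at this ⊢
    exact this
  have hhβ := norm_le_mul_pow_of_norm_deriv_le_mul_pow (f := fun x ↦ h x - β * x) 2
    (hch.sub (by fun_prop))
    (fun x hx ↦ (hdh x hx).sub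
      (((hasDerivAt_id' x).const_mul β).hasDerivWithinAt.congr_deriv (mul_one β)))
    (by simp [h0]) (by simpa using fun x hx ↦ hh' x (Ico_subset_Icc_self hx))
  refine fun x hx ↦ ⟨hh' x hx, (hhβ x hx).trans_eq ?_⟩
  push_cast
  ring

theorem cone_warping_asymptotics_general
    (A C α : ℝ) (hA : 0 < A) (hC : 0 < C) (hα : 0 < α)
    (h h' h'' : ℝ → ℝ)
    (hd1 : ∀ r ∈ Set.Ico (0 : ℝ) A, HasDerivWithinAt h (h' r) (Set.Ico (0 : ℝ) A) r)
    (hd2 : ∀ r ∈ Set.Ico (0 : ℝ) A, HasDerivWithinAt h' (h'' r) (Set.Ico (0 : ℝ) A) r)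
    (h0 : h 0 = 0) (h'0 : h' 0 = α / (2 * Real.pi))
    (hcurv : ∀ r ∈ Set.Ico (0 : ℝ) A, |h'' r| ≤ C * h r) :
    ∃ C' > 0, ∃ r₀ ∈ Set.Ioo (0 : ℝ) A, ∀ r ∈ Set.Ioo (0 : ℝ) r₀,
      |h r - α / (2 * Real.pi) * r| ≤ C' * r ^ 3 ∧
      |r * h' r / h r - 1| ≤ C' * r ^ 2 := by
  set β := α / (2 * Real.pi)
  have hβ : 0 < β := by positivity
  clear_value β
  set b := A / 2
  have hb : 0 < b := half_pos hA
  have hbA : b < A := half_lt_self hA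
  have hch' := continuousOn_Icc_of_hasDerivWithinAt_Ico hbA hd2
  obtain ⟨M, hM⟩ := isCompact_Icc.exists_bound_of_continuousOn hch'
  have hM0 : 0 ≤ M := (norm_nonneg _).trans (hM 0 ⟨le_rfl, hb.le⟩)
  have htaylor := taylor_remainders_le_of_abs_deriv2_le_mul_abs hC.le
    (continuousOn_Icc_of_hasDerivWithinAt_Ico hbA hd1) hch'
    (hasDerivWithinAt_Ici_of_hasDerivWithinAt_Ico hbA.le hd1)
    (hasDerivWithinAt_Ici_of_hasDerivWithinAt_Ico hbA.le hd2) h0 h'0 hM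
    fun x hx ↦ (hcurv x ⟨hx.1, hx.2.trans hbA⟩).trans (by gcongr; exact le_abs_self _)
  set K := C * M / 2 with hK_def
  have hK : 0 ≤ K := by positivity
  obtain ⟨δ, hδ, hsmall⟩ : ∃ δ > 0, ∀ ⦃r : ℝ⦄, dist r 0 < δ → K * r ^ 2 < β / 2 :=
    Metric.eventually_nhds_iff.1 <| (Continuous.tendsto (by fun_prop) 0).eventually
      (gt_mem_nhds (by simpa using half_pos hβ))
  refine ⟨K + 4 * K / β + 1, by positivity, min δ b,
    ⟨lt_min hδ hb, (min_le_right _ _).trans_lt hbA⟩, fun r ⟨hr0, hr⟩ ↦ ?_⟩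
  obtain ⟨hquad, hcubic⟩ := htaylor r ⟨hr0.le, (lt_min_iff.1 hr).2.le⟩
  replace hcubic : |h r - β * r| ≤ K * r ^ 3 := hcubic.trans (by gcongr; linarith)
  have hratio := abs_mul_div_sub_one_le hβ hr0 hcubic hquad
    (hsmall (by simpa [abs_of_pos hr0] using (lt_min_iff.1 hr).1)).le
  have hK' : 0 ≤ 4 * K / β := by positivity
  exact ⟨hcubic.trans (by gcongr; linarith), hratio.trans (by gcongr; linarith)⟩

/-- Near a cone point of angle `α` with bounded curvature (`|h''| ≤ C·h`), the
warping function satisfies `h(r) = (α/2π)·r + O(r³)` and `r·h'/h − 1 = O(r²)`. -/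
theorem cone_warping_asymptotics
    (A C α : ℝ) (hA : 0 < A) (hC : 0 < C) (hα : 0 < α)
    (h h' h'' : ℝ → ℝ)
    (hd1 : ∀ r ∈ Set.Ico (0 : ℝ) A, HasDerivWithinAt h (h' r) (Set.Ico (0 : ℝ) A) r)
    (hd2 : ∀ r ∈ Set.Ico (0 : ℝ) A, HasDerivWithinAt h' (h'' r) (Set.Ico (0 : ℝ) A) r)
    (hcont : ContinuousOn h'' (Set.Ico (0 : ℝ) A))
    (h0 : h 0 = 0) (h'0 : h' 0 = α / (2 * Real.pi))
    (hpos : ∀ r ∈ Set.Ioo (0 : ℝ) A, 0 < h r)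
    (hcurv : ∀ r ∈ Set.Ico (0 : ℝ) A, |h'' r| ≤ C * h r) :
    ∃ C' > 0, ∃ r₀ ∈ Set.Ioo (0 : ℝ) A, ∀ r ∈ Set.Ioo (0 : ℝ) r₀,
      |h r - α / (2 * Real.pi) * r| ≤ C' * r ^ 3 ∧
      |r * h' r / h r - 1| ≤ C' * r ^ 2 :=
  cone_warping_asymptotics_general A C α hA hC hα h h' h'' hd1 hd2 h0 h'0 hcurv
end

section
/- Let Λ > 0, R > 0, and let h : [0, R] → ℝ be twice continuously differentiable with h(0) = 0, 0 < h'(0) ≤ 1, h(r) ≥ 0 and h''(r) ≤ Λ·h(r) for all r ∈ [0, R]. Then h(r) ≤ sinh(√Λ·r)/√Λ for all r ∈ [0, R]. -/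
/-!
Put `c = √Λ` and `D = h - sinh (c ·) / c`. Then `D'' ≤ c² D`, `D 0 = 0` and
`D' 0 = h' 0 - 1 ≤ 0`. Factoring `∂² - c² = (∂ - c)(∂ + c)`, two first-order comparisons
(`u' ≤ k u` and `u a ≤ 0` give `u ≤ 0`, since `e^{-k x} u` is antitone) show first
`D' + c D ≤ 0` and then `D ≤ 0`.
-/

open Set Real

theorem nonpos_of_hasDerivWithinAt_le_mul {f f' : ℝ → ℝ} {k a b : ℝ}
    (hf : ∀ x ∈ Icc a b, HasDerivWithinAt f (f' x) (Icc a b) x)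
    (hf' : ∀ x ∈ Icc a b, f' x ≤ k * f x) (ha : f a ≤ 0) :
    ∀ x ∈ Icc a b, f x ≤ 0 := by
  have hg : ∀ x ∈ Icc a b, HasDerivWithinAt (fun y => exp (-k * y) * f y)
      (exp (-k * x) * (f' x - k * f x)) (Icc a b) x := by
    intro x hx
    exact ((((hasDerivAt_id' x).const_mul (-k)).exp.hasDerivWithinAt).mul (hf x hx)).congr_deriv
      (by ring)
  have hanti : AntitoneOn (fun y => exp (-k * y) * f y) (Icc a b) :=
    antitoneOn_of_hasDerivWithinAt_nonpos (convex_Icc a b)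
      (fun x hx => (hg x hx).continuousWithinAt)
      (fun x hx => (hg x (interior_subset hx)).mono interior_subset)
      (fun x hx => mul_nonpos_of_nonneg_of_nonpos (exp_pos _).le
        (sub_nonpos.2 (hf' x (interior_subset hx))))
  intro x hx
  have hxa : exp (-k * x) * f x ≤ exp (-k * a) * f a :=
    hanti ⟨le_rfl, hx.1.trans hx.2⟩ hx hx.1
  exact nonpos_of_mul_nonpos_right
    (hxa.trans (mul_nonpos_of_nonneg_of_nonpos (exp_pos _).le ha)) (exp_pos _)

theorem nonpos_of_hasDerivWithinAt_deriv_le_sq_mul {f f' f'' : ℝ → ℝ} {c a b : ℝ}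
    (hf : ∀ x ∈ Icc a b, HasDerivWithinAt f (f' x) (Icc a b) x)
    (hf' : ∀ x ∈ Icc a b, HasDerivWithinAt f' (f'' x) (Icc a b) x)
    (hf'' : ∀ x ∈ Icc a b, f'' x ≤ c ^ 2 * f x) (ha : f a ≤ 0)
    (ha' : f' a + c * f a ≤ 0) :
    ∀ x ∈ Icc a b, f x ≤ 0 := by
  have hsum : ∀ x ∈ Icc a b, f' x + c * f x ≤ 0 :=
    nonpos_of_hasDerivWithinAt_le_mul (k := c)
      (fun x hx => (hf' x hx).add ((hf x hx).const_mul c))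
      (fun x hx => by linarith [hf'' x hx]) ha'
  exact nonpos_of_hasDerivWithinAt_le_mul (k := -c) hf (fun x hx => by linarith [hsum x hx]) ha

theorem warping_sinh_comparison_general
    (Λ R : ℝ) (hΛ : 0 < Λ)
    (h h' h'' : ℝ → ℝ)
    (hd1 : ∀ r ∈ Set.Icc (0 : ℝ) R, HasDerivWithinAt h (h' r) (Set.Icc (0 : ℝ) R) r)
    (hd2 : ∀ r ∈ Set.Icc (0 : ℝ) R, HasDerivWithinAt h' (h'' r) (Set.Icc (0 : ℝ) R) r)
    (h0 : h 0 = 0) (h'0le : h' 0 ≤ 1)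
    (hcomp : ∀ r ∈ Set.Icc (0 : ℝ) R, h'' r ≤ Λ * h r) :
    ∀ r ∈ Set.Icc (0 : ℝ) R, h r ≤ Real.sinh (Real.sqrt Λ * r) / Real.sqrt Λ := by
  set c := √Λ
  have hc : c ≠ 0 := (sqrt_pos.2 hΛ).ne'
  have hc2 : c ^ 2 = Λ := sq_sqrt hΛ.le
  have hsinh : ∀ r, HasDerivAt (fun y => sinh (c * y) / c) (cosh (c * r)) r := fun r =>
    (((hasDerivAt_id' r).const_mul c).sinh.div_const c).congr_deriv (by field_simp)
  have hcosh : ∀ r, HasDerivAt (fun y => cosh (c * y)) (c ^ 2 * (sinh (c * r) / c)) r := fun r =>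
    ((hasDerivAt_id' r).const_mul c).cosh.congr_deriv (by field_simp)
  have hD := nonpos_of_hasDerivWithinAt_deriv_le_sq_mul (c := c)
    (f := fun r => h r - sinh (c * r) / c) (f' := fun r => h' r - cosh (c * r))
    (fun r hr => (hd1 r hr).sub (hsinh r).hasDerivWithinAt)
    (fun r hr => (hd2 r hr).sub (hcosh r).hasDerivWithinAt)
    (fun r hr => by rw [mul_sub, hc2]; linarith [hcomp r hr])
    (by simp [h0]) (by simp [h0, h'0le])
  exact fun r hr => sub_nonpos.1 (hD r hr)

/-- Comparison estimate with hyperbolic space of curvature `−Λ`: if `h(0) = 0`,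
`0 < h'(0) ≤ 1`, `h ≥ 0` and `h'' ≤ Λ·h` on `[0, R]`, then
`h(r) ≤ sinh(√Λ·r)/√Λ`. -/
theorem warping_sinh_comparison
    (Λ R : ℝ) (hΛ : 0 < Λ) (hR : 0 < R)
    (h h' h'' : ℝ → ℝ)
    (hd1 : ∀ r ∈ Set.Icc (0 : ℝ) R, HasDerivWithinAt h (h' r) (Set.Icc (0 : ℝ) R) r)
    (hd2 : ∀ r ∈ Set.Icc (0 : ℝ) R, HasDerivWithinAt h' (h'' r) (Set.Icc (0 : ℝ) R) r)
    (hcont : ContinuousOn h'' (Set.Icc (0 : ℝ) R))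
    (h0 : h 0 = 0) (h'0pos : 0 < h' 0) (h'0le : h' 0 ≤ 1)
    (hnonneg : ∀ r ∈ Set.Icc (0 : ℝ) R, 0 ≤ h r)
    (hcomp : ∀ r ∈ Set.Icc (0 : ℝ) R, h'' r ≤ Λ * h r) :
    ∀ r ∈ Set.Icc (0 : ℝ) R, h r ≤ Real.sinh (Real.sqrt Λ * r) / Real.sqrt Λ :=
  warping_sinh_comparison_general Λ R hΛ h h' h'' hd1 hd2 h0 h'0le hcomp
end

section
/- Let Λ > 0, R > 0, and let h : [0, R] → ℝ be twice continuously differentiable with h(0) = 0, 0 < h'(0) ≤ 1, h(r) ≥ 0 and |h''(r)| ≤ Λ·h(r) for all r ∈ [0, R]. Then |h'(r) − h'(0)| ≤ cosh(√Λ·r) − 1 for all r ∈ [0, R]; in particular |h'(r) − h'(0)| ≤ Λ·r² for all sufficiently small r. -/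
/-!
With `c = √Λ`, the function `f = h'(0) sinh(c s) - c h(s)` satisfies `f(0) = f'(0) = 0` and
`f'' ≥ c² f`. For any such `f` the Wronskian `W = f' cosh(c s) - c f sinh(c s)` has
`W' = (f'' - c² f) cosh(c s) ≥ 0`, so `W ≥ 0`; since `(f / cosh(c s))' = W / cosh²(c s)`, also
`f ≥ 0`. Hence `c h ≤ sinh(c s)`, so `|h''| ≤ c² h ≤ c sinh(c s) = (cosh(c s))'`, and the
fencing theorem bounds `|h'(r) - h'(0)|` by `cosh(c r) - 1`. For `c r ≤ 1` this is at most
`(c r)² = Λ r²`, because `cosh x ≤ exp(x² / 2)`.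
-/

open Set Real

theorem abs_sub_le_sub_of_abs_deriv_le {a b : ℝ} {f f' g g' : ℝ → ℝ}
    (hf : ∀ x ∈ Icc a b, HasDerivWithinAt f (f' x) (Icc a b) x)
    (hg : ∀ x, HasDerivAt g (g' x) x) (bound : ∀ x ∈ Ico a b, |f' x| ≤ g' x) :
    ∀ x ∈ Icc a b, |f x - f a| ≤ g x - g a := by
  refine image_norm_le_of_norm_deriv_right_le_deriv_boundary
    (fun x hx => ((hf x hx).sub_const (f a)).continuousWithinAt) (fun x hx => ?_)
    (by simp) (fun x => (hg x).sub_const (g a)) bound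
  exact ((hf x (Ico_subset_Icc_self hx)).sub_const (f a)).mono_of_mem_nhdsWithin
    (Icc_mem_nhdsGE_of_mem hx)

theorem monotoneOn_of_hasDerivWithinAt_Icc_nonneg {a b : ℝ} {f f' : ℝ → ℝ}
    (hf : ∀ x ∈ Icc a b, HasDerivWithinAt f (f' x) (Icc a b) x)
    (hf'₀ : ∀ x ∈ Ioo a b, 0 ≤ f' x) : MonotoneOn f (Icc a b) :=
  monotoneOn_of_hasDerivWithinAt_nonneg (convex_Icc a b)
    (fun x hx => (hf x hx).continuousWithinAt)
    (fun x hx => (hf x (interior_subset hx)).mono interior_subset)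
    (fun x hx => hf'₀ x (by rwa [interior_Icc] at hx))

theorem cosh_sub_one_le_sq {x : ℝ} (hx : x ^ 2 ≤ 2) : cosh x - 1 ≤ x ^ 2 := by
  have hsmall : |x ^ 2 / 2| ≤ 1 := by
    rw [abs_of_nonneg (by positivity)]; linarith
  calc cosh x - 1 ≤ exp (x ^ 2 / 2) - 1 := by linarith [cosh_le_exp_half_sq x]
    _ ≤ |exp (x ^ 2 / 2) - 1| := le_abs_self _
    _ ≤ 2 * |x ^ 2 / 2| := abs_exp_sub_one_le hsmall
    _ = x ^ 2 := by rw [abs_of_nonneg (by positivity)]; ring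

theorem hasDerivAt_cosh_mul (c x : ℝ) :
    HasDerivAt (fun s => cosh (c * s)) (c * sinh (c * x)) x := by
  simpa [mul_comm] using ((hasDerivAt_id x).const_mul c).cosh

theorem hasDerivAt_sinh_mul (c x : ℝ) :
    HasDerivAt (fun s => sinh (c * s)) (c * cosh (c * x)) x := by
  simpa [mul_comm] using ((hasDerivAt_id x).const_mul c).sinh

theorem nonneg_of_sq_mul_le_second_deriv {c R : ℝ} {f f' f'' : ℝ → ℝ}
    (hf : ∀ x ∈ Icc 0 R, HasDerivWithinAt f (f' x) (Icc 0 R) x)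
    (hf' : ∀ x ∈ Icc 0 R, HasDerivWithinAt f' (f'' x) (Icc 0 R) x)
    (h0 : 0 ≤ f 0) (h'0 : 0 ≤ f' 0) (hineq : ∀ x ∈ Icc 0 R, c ^ 2 * f x ≤ f'' x) :
    ∀ x ∈ Icc 0 R, 0 ≤ f x := by
  set W : ℝ → ℝ := fun s => f' s * cosh (c * s) - c * f s * sinh (c * s)
  have hW : ∀ x ∈ Icc 0 R,
      HasDerivWithinAt W ((f'' x - c ^ 2 * f x) * cosh (c * x)) (Icc 0 R) x := by
    intro x hx
    exact (((hf' x hx).mul (hasDerivAt_cosh_mul c x).hasDerivWithinAt).sub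
      (((hf x hx).const_mul c).mul (hasDerivAt_sinh_mul c x).hasDerivWithinAt)).congr_deriv
      (by ring)
  have hWnonneg : ∀ x ∈ Icc 0 R, 0 ≤ W x := fun x hx => by
    have hWx := monotoneOn_of_hasDerivWithinAt_Icc_nonneg hW
      (fun y hy => mul_nonneg (sub_nonneg.2 (hineq y (Ioo_subset_Icc_self hy))) (cosh_pos _).le)
      ⟨le_rfl, hx.1.trans hx.2⟩ hx hx.1
    have hW0 : W 0 = f' 0 := by simp [W]
    exact (hW0 ▸ h'0).trans hWx
  have hq : ∀ x ∈ Icc 0 R,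
      HasDerivWithinAt (fun s => f s / cosh (c * s)) (W x / cosh (c * x) ^ 2) (Icc 0 R) x := by
    intro x hx
    exact ((hf x hx).div (hasDerivAt_cosh_mul c x).hasDerivWithinAt (cosh_pos _).ne').congr_deriv
      (by simp only [W]; ring)
  intro x hx
  have hq0 : f 0 ≤ f x / cosh (c * x) := by
    simpa using monotoneOn_of_hasDerivWithinAt_Icc_nonneg hq
      (fun y hy => div_nonneg (hWnonneg y (Ioo_subset_Icc_self hy)) (sq_nonneg _))
      ⟨le_rfl, hx.1.trans hx.2⟩ hx hx.1
  simpa using (le_div_iff₀ (cosh_pos (c * x))).1 (h0.trans hq0)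

theorem mul_le_mul_sinh_of_second_deriv_le_sq_mul {c R : ℝ} (hc : 0 ≤ c)
    {h h' h'' : ℝ → ℝ}
    (hd1 : ∀ x ∈ Icc 0 R, HasDerivWithinAt h (h' x) (Icc 0 R) x)
    (hd2 : ∀ x ∈ Icc 0 R, HasDerivWithinAt h' (h'' x) (Icc 0 R) x)
    (h0 : h 0 = 0) (hineq : ∀ x ∈ Icc 0 R, h'' x ≤ c ^ 2 * h x) :
    ∀ x ∈ Icc 0 R, c * h x ≤ h' 0 * sinh (c * x) := by
  have key := nonneg_of_sq_mul_le_second_deriv (c := c)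
    (f := fun s => h' 0 * sinh (c * s) - c * h s)
    (f' := fun s => h' 0 * (c * cosh (c * s)) - c * h' s)
    (f'' := fun s => h' 0 * (c * (c * sinh (c * s))) - c * h'' s)
    (fun x hx => (((hasDerivAt_sinh_mul c x).hasDerivWithinAt.const_mul _).sub
      ((hd1 x hx).const_mul c)))
    (fun x hx => (((hasDerivAt_cosh_mul c x).const_mul c).hasDerivWithinAt.const_mul _).sub
      ((hd2 x hx).const_mul c))
    (by simp [h0]) (by simp [mul_comm])
    (fun x hx => by nlinarith [mul_le_mul_of_nonneg_left (hineq x hx) hc])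
  exact fun x hx => sub_nonneg.1 (key x hx)

theorem warping_derivative_comparison_general
    (Λ R : ℝ) (hΛ : 0 < Λ)
    (h h' h'' : ℝ → ℝ)
    (hd1 : ∀ r ∈ Set.Icc (0 : ℝ) R, HasDerivWithinAt h (h' r) (Set.Icc (0 : ℝ) R) r)
    (hd2 : ∀ r ∈ Set.Icc (0 : ℝ) R, HasDerivWithinAt h' (h'' r) (Set.Icc (0 : ℝ) R) r)
    (h0 : h 0 = 0) (h'0le : h' 0 ≤ 1)
    (hcomp : ∀ r ∈ Set.Icc (0 : ℝ) R, |h'' r| ≤ Λ * h r) :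
    (∀ r ∈ Set.Icc (0 : ℝ) R, |h' r - h' 0| ≤ Real.cosh (Real.sqrt Λ * r) - 1) ∧
    ∃ r₁ > 0, ∀ r ∈ Set.Icc (0 : ℝ) R, r ≤ r₁ → |h' r - h' 0| ≤ Λ * r ^ 2 := by
  set c := √Λ
  have hc : 0 < c := sqrt_pos.2 hΛ
  have hc2 : c ^ 2 = Λ := sq_sqrt hΛ.le
  have hh_le : ∀ r ∈ Icc 0 R, c * h r ≤ sinh (c * r) := fun r hr =>
    (mul_le_mul_sinh_of_second_deriv_le_sq_mul hc.le hd1 hd2 h0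
      (fun x hx => hc2 ▸ (le_abs_self _).trans (hcomp x hx)) r hr).trans
    (mul_le_of_le_one_left (sinh_nonneg_iff.2 (mul_nonneg hc.le hr.1)) h'0le)
  have hbound : ∀ r ∈ Ico 0 R, |h'' r| ≤ c * sinh (c * r) := fun r hr => calc
    |h'' r| ≤ Λ * h r := hcomp r (Ico_subset_Icc_self hr)
    _ = c * (c * h r) := by rw [← hc2]; ring
    _ ≤ c * sinh (c * r) := mul_le_mul_of_nonneg_left (hh_le r (Ico_subset_Icc_self hr)) hc.le
  have main : ∀ r ∈ Icc 0 R, |h' r - h' 0| ≤ cosh (c * r) - 1 := fun r hr => by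
    simpa using abs_sub_le_sub_of_abs_deriv_le hd2 (hasDerivAt_cosh_mul c) hbound r hr
  refine ⟨main, c⁻¹, inv_pos.2 hc, fun r hr hr₁ => (main r hr).trans ?_⟩
  have hcr : c * r ≤ 1 :=
    (mul_le_mul_of_nonneg_left hr₁ hc.le).trans_eq (mul_inv_cancel₀ hc.ne')
  calc cosh (c * r) - 1 ≤ (c * r) ^ 2 :=
        cosh_sub_one_le_sq (by nlinarith [mul_nonneg hc.le hr.1])
    _ = Λ * r ^ 2 := by rw [mul_pow, hc2]

/-- Under the curvature bound `|h''| ≤ Λ·h` with `h(0) = 0`, `0 < h'(0) ≤ 1`, `h ≥ 0`,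
the derivative of the warping function satisfies `|h'(r) − h'(0)| ≤ cosh(√Λ·r) − 1`
on `[0, R]`; in particular `|h'(r) − h'(0)| ≤ Λ·r²` for all sufficiently small `r`. -/
theorem warping_derivative_comparison
    (Λ R : ℝ) (hΛ : 0 < Λ) (hR : 0 < R)
    (h h' h'' : ℝ → ℝ)
    (hd1 : ∀ r ∈ Set.Icc (0 : ℝ) R, HasDerivWithinAt h (h' r) (Set.Icc (0 : ℝ) R) r)
    (hd2 : ∀ r ∈ Set.Icc (0 : ℝ) R, HasDerivWithinAt h' (h'' r) (Set.Icc (0 : ℝ) R) r)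
    (hcont : ContinuousOn h'' (Set.Icc (0 : ℝ) R))
    (h0 : h 0 = 0) (h'0pos : 0 < h' 0) (h'0le : h' 0 ≤ 1)
    (hnonneg : ∀ r ∈ Set.Icc (0 : ℝ) R, 0 ≤ h r)
    (hcomp : ∀ r ∈ Set.Icc (0 : ℝ) R, |h'' r| ≤ Λ * h r) :
    (∀ r ∈ Set.Icc (0 : ℝ) R, |h' r - h' 0| ≤ Real.cosh (Real.sqrt Λ * r) - 1) ∧
    ∃ r₁ > 0, ∀ r ∈ Set.Icc (0 : ℝ) R, r ≤ r₁ → |h' r - h' 0| ≤ Λ * r ^ 2 :=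
  warping_derivative_comparison_general Λ R hΛ h h' h'' hd1 hd2 h0 h'0le hcomp
end
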